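/- arXiv:2403.10247 — 13 statements merged into one kernel-verified Lean document; each statement's English description precedes it below -/
import Mathlib

section
/- Let H be a complex Hilbert space and S, T positive bounded operators on H with T having closed range. Then S ≤ T (Löwner order) if and only if the spectral radius ρ(S^{1/2} T† S^{1/2}) ≤ 1 and ran(S^{1/2}) ⊆ ran(T). -/
open ContinuousLinearMap

/-- `Td` is the Moore–Penrose inverse of `T`. -/
def IsMoorePenroseInverse {H : Type*} [NormedAddCommGroup H] [InnerProductSpace ℂ H]
    [CompleteSpace H] (T Td : H →L[ℂ] H) : Prop :=
  T ∘L Td ∘L T = T ∧ Td ∘L T ∘L Td = Td ∧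
    IsSelfAdjoint (T ∘L Td) ∧ IsSelfAdjoint (Td ∘L T)

/-!
Write `R = S^{1/2}` and `A = R T† R`. On both sides `ran R ⊆ ran T` holds (if `S ≤ T`, because
`ker T ⊆ ker R` and `ran T` is closed), so every `v` gives `w = T† R v` with `T w = R v`, and
`⟪A v, v⟫ = ⟪T w, w⟫`. By uniqueness of the Moore–Penrose inverse `T†` is self-adjoint, hence
positive as `T† = T† T T†`; so `A ≥ 0`, `ρ(A) = ‖A‖`, and `ρ(A) ≤ 1` says `⟪T w, w⟫ ≤ ‖v‖²` for
all `v`. If `S ≤ T` this follows from `⟪T w, w⟫ = ⟪v, R w⟫ ≤ ‖v‖ ‖R w‖` and `‖R w‖² ≤ ⟪T w, w⟫`.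
Conversely, for `v = R u` the Cauchy–Schwarz inequality for the form of `T` gives
`‖v‖⁴ = ⟪T u, w⟫² ≤ ⟪T u, u⟫ ⟪T w, w⟫ ≤ ⟪T u, u⟫ ‖v‖²`, that is `⟪S u, u⟫ ≤ ⟪T u, u⟫`.
-/

open scoped InnerProductSpace
open RCLike

namespace IsMoorePenroseInverse

variable {H : Type*} [NormedAddCommGroup H] [InnerProductSpace ℂ H] [CompleteSpace H]
  {T Td : H →L[ℂ] H}

theorem iff_mul : IsMoorePenroseInverse T Td ↔ T * Td * T = T ∧ Td * T * Td = Td ∧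
    IsSelfAdjoint (T * Td) ∧ IsSelfAdjoint (Td * T) := by
  simp only [mul_assoc]; rfl

theorem unique {X Y : H →L[ℂ] H} (hX : IsMoorePenroseInverse T X)
    (hY : IsMoorePenroseInverse T Y) : X = Y := by
  obtain ⟨hX₁, hX₂, hX₃, hX₄⟩ := iff_mul.mp hX
  obtain ⟨hY₁, hY₂, hY₃, hY₄⟩ := iff_mul.mp hY
  have hT_right : star T = star T * (T * Y) := by
    calc star T = star (T * Y * T) := by rw [hY₁]
      _ = star T * star (T * Y) := by simp only [star_mul, mul_assoc]
      _ = star T * (T * Y) := by rw [hY₃.star_eq]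
  have hT_left : star T = X * T * star T := by
    calc star T = star (T * X * T) := by rw [hX₁]
      _ = star (X * T) * star T := by simp only [star_mul, mul_assoc]
      _ = X * T * star T := by rw [hX₄.star_eq]
  calc X = X * star (T * X) := by rw [hX₃.star_eq, ← mul_assoc, hX₂]
    _ = X * star X * star T := by rw [star_mul, mul_assoc]
    _ = X * star (T * X) * (T * Y) := by nth_rw 1 [hT_right]; simp only [star_mul, mul_assoc]
    _ = X * T * Y := by rw [hX₃.star_eq, ← mul_assoc X T X, hX₂, mul_assoc]
    _ = X * T * star (Y * T) * Y := by rw [hY₄.star_eq, mul_assoc (X * T) (Y * T), hY₂]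
    _ = X * T * star T * star Y * Y := by rw [star_mul, ← mul_assoc]
    _ = Y := by rw [← hT_left, ← star_mul, hY₄.star_eq, hY₂]

theorem star (h : IsMoorePenroseInverse T Td) : IsMoorePenroseInverse (star T) (star Td) := by
  obtain ⟨h₁, h₂, h₃, h₄⟩ := iff_mul.mp h
  refine iff_mul.mpr ⟨?_, ?_, ?_, ?_⟩
  · rw [← star_mul, ← star_mul, ← mul_assoc, h₁]
  · rw [← star_mul, ← star_mul, ← mul_assoc, h₂]
  · rw [← star_mul]; exact IsSelfAdjoint.star_iff.mpr h₄
  · rw [← star_mul]; exact IsSelfAdjoint.star_iff.mpr h₃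

theorem isSelfAdjoint (hT : IsSelfAdjoint T) (h : IsMoorePenroseInverse T Td) :
    IsSelfAdjoint Td :=
  (h.unique (hT.star_eq ▸ h.star)).symm

theorem isPositive (hT : T.IsPositive) (h : IsMoorePenroseInverse T Td) : Td.IsPositive := by
  have hTd : Td ∘L T ∘L adjoint Td = Td := by
    rw [(h.isSelfAdjoint hT.isSelfAdjoint).adjoint_eq]
    exact h.2.1
  exact hTd ▸ hT.conj_adjoint Td

theorem apply_apply_of_mem_range (h : IsMoorePenroseInverse T Td) {y : H}
    (hy : y ∈ T.range) : T (Td y) = y := by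
  obtain ⟨x, rfl⟩ := hy
  exact DFunLike.congr_fun h.1 x

end IsMoorePenroseInverse

namespace ContinuousLinearMap

section General

variable {𝕜 E F : Type*} [RCLike 𝕜] [NormedAddCommGroup E] [InnerProductSpace 𝕜 E]
  [NormedAddCommGroup F] [InnerProductSpace 𝕜 F]

theorem IsPositive.norm_inner_sq_le {T : E →L[𝕜] E} (hT : T.IsPositive) (u w : E) :
    ‖⟪T u, w⟫_𝕜‖ ^ 2 ≤ re ⟪T u, u⟫_𝕜 * re ⟪T w, w⟫_𝕜 := by
  let c : PreInnerProductSpace.Core 𝕜 E :=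
    { inner := fun x y => ⟪x, T y⟫_𝕜
      conj_inner_symm := fun x y => (inner_conj_symm (T x) y).trans (hT.isSymmetric x y)
      re_inner_nonneg := hT.re_inner_nonneg_right
      add_left := fun x y z => inner_add_left x y (T z)
      smul_left := fun x y r => inner_smul_left x (T y) r }
  have h := InnerProductSpace.Core.inner_mul_inner_self_le (c := c) u w
  change ‖⟪u, T w⟫_𝕜‖ * ‖⟪w, T u⟫_𝕜‖ ≤ re ⟪u, T u⟫_𝕜 * re ⟪w, T w⟫_𝕜 at h
  rwa [← hT.inner_left_eq_inner_right u w, norm_inner_symm w, ← hT.inner_left_eq_inner_right,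
    ← hT.inner_left_eq_inner_right, ← pow_two] at h

variable [CompleteSpace E] [CompleteSpace F]

theorem _root_.IsSelfAdjoint.inner_left_eq_inner_right {A : E →L[𝕜] E} (hA : IsSelfAdjoint A)
    (x y : E) : ⟪A x, y⟫_𝕜 = ⟪x, A y⟫_𝕜 :=
  hA.isSymmetric x y

theorem ker_le_ker_of_isPositive_sub {T : E →L[𝕜] E} {R : E →L[𝕜] F}
    (h : (T - adjoint R ∘L R).IsPositive) : T.ker ≤ R.ker := by
  intro x (hx : T x = 0)
  have hle := h.re_inner_nonneg_left x
  rw [sub_apply, inner_sub_left, map_sub, ← apply_norm_sq_eq_inner_adjoint_left, hx,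
    inner_zero_left, map_zero] at hle
  show R x = 0
  exact norm_eq_zero.mp (by nlinarith [norm_nonneg (R x)])

theorem range_le_range_of_ker_adjoint_le {B C : E →L[𝕜] F} (hC : IsClosed (C.range : Set F))
    (h : (adjoint C).ker ≤ (adjoint B).ker) : B.range ≤ C.range :=
  calc B.range ≤ B.range.topologicalClosure := Submodule.le_topologicalClosure _
    _ = (adjoint B).kerᗮ := by rw [orthogonal_ker, adjoint_adjoint]
    _ ≤ (adjoint C).kerᗮ := Submodule.orthogonal_le h
    _ = C.range := by rw [orthogonal_ker, adjoint_adjoint, hC.submodule_topologicalClosure_eq]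

end General

variable {H : Type*} [NormedAddCommGroup H] [InnerProductSpace ℂ H] [CompleteSpace H]

theorem IsPositive.spectralRadius_le_one_iff {A : H →L[ℂ] H} (hA : A.IsPositive) :
    spectralRadius ℂ A ≤ 1 ↔ ∀ x, re ⟪A x, x⟫_ℂ ≤ ‖x‖ ^ 2 := by
  rw [hA.isSelfAdjoint.spectralRadius_eq_nnnorm, ENNReal.coe_le_one_iff,
    CStarAlgebra.nnnorm_le_one_iff_of_nonneg _ ((nonneg_iff_isPositive _).mpr hA), le_def,
    isPositive_def', and_iff_right ((IsSelfAdjoint.one _).sub hA.isSelfAdjoint)]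
  refine forall_congr' fun x => ?_
  rw [reApplyInnerSelf_apply, sub_apply, one_apply_eq_self, inner_sub_left, map_sub,
    inner_self_eq_norm_sq, sub_nonneg]

end ContinuousLinearMap

section LoewnerOrder

variable {H : Type*} [NormedAddCommGroup H] [InnerProductSpace ℂ H] [CompleteSpace H]
  {T Td R : H →L[ℂ] H}

theorem re_inner_comp_moorePenrose_comp_apply_self (hR : IsSelfAdjoint R)
    (hTd : IsMoorePenroseInverse T Td) (hRT : R.range ≤ T.range) (v : H) :
    re ⟪(R ∘L Td ∘L R) v, v⟫_ℂ = re ⟪T (Td (R v)), Td (R v)⟫_ℂ := by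
  have hw : T (Td (R v)) = R v := hTd.apply_apply_of_mem_range (hRT ⟨v, rfl⟩)
  rw [comp_apply, comp_apply, hR.inner_left_eq_inner_right, hw, inner_re_symm]

theorem re_inner_comp_moorePenrose_comp_apply_self_le (hR : IsSelfAdjoint R)
    (hTd : IsMoorePenroseInverse T Td) (hRT : R.range ≤ T.range)
    (hTR : (T - R ∘L R).IsPositive) (v : H) :
    re ⟪(R ∘L Td ∘L R) v, v⟫_ℂ ≤ ‖v‖ ^ 2 := by
  rw [re_inner_comp_moorePenrose_comp_apply_self hR hTd hRT]
  set w := Td (R v)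
  have hw : T w = R v := hTd.apply_apply_of_mem_range (hRT ⟨v, rfl⟩)
  have hRw : ‖R w‖ ^ 2 ≤ re ⟪T w, w⟫_ℂ := by
    have := hTR.re_inner_nonneg_left w
    rwa [sub_apply, inner_sub_left, map_sub, comp_apply, hR.inner_left_eq_inner_right,
      inner_self_eq_norm_sq, sub_nonneg] at this
  have hTw_le : re ⟪T w, w⟫_ℂ ≤ ‖v‖ * ‖R w‖ :=
    calc re ⟪T w, w⟫_ℂ = re ⟪v, R w⟫_ℂ := by rw [hw, hR.inner_left_eq_inner_right]
      _ ≤ ‖⟪v, R w⟫_ℂ‖ := re_le_norm _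
      _ ≤ ‖v‖ * ‖R w‖ := norm_inner_le_norm _ _
  nlinarith [norm_nonneg v, norm_nonneg (R w)]

theorem isPositive_sub_comp_self_of_re_inner_le (hT : T.IsPositive) (hR : IsSelfAdjoint R)
    (hTd : IsMoorePenroseInverse T Td) (hRT : R.range ≤ T.range)
    (h : ∀ v, re ⟪(R ∘L Td ∘L R) v, v⟫_ℂ ≤ ‖v‖ ^ 2) : (T - R ∘L R).IsPositive := by
  have hRR : IsSelfAdjoint (R ∘L R) := by
    simpa [hR.adjoint_eq] using (isPositive_adjoint_comp_self R).isSelfAdjoint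
  refine isPositive_def'.mpr ⟨hT.isSelfAdjoint.sub hRR, fun u => ?_⟩
  rw [reApplyInnerSelf_apply, sub_apply, inner_sub_left, map_sub, sub_nonneg, comp_apply,
    hR.inner_left_eq_inner_right, inner_self_eq_norm_sq]
  set v := R u
  set w := Td (R v)
  have hw : T w = R v := hTd.apply_apply_of_mem_range (hRT ⟨v, rfl⟩)
  have huw : re ⟪T u, w⟫_ℂ = ‖v‖ ^ 2 := by
    rw [hT.inner_left_eq_inner_right, hw, ← hR.inner_left_eq_inner_right, inner_self_eq_norm_sq]
  have hww : re ⟪T w, w⟫_ℂ ≤ ‖v‖ ^ 2 := by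
    rw [← re_inner_comp_moorePenrose_comp_apply_self hR hTd hRT]; exact h v
  have hre : re ⟪T u, w⟫_ℂ ^ 2 ≤ ‖⟪T u, w⟫_ℂ‖ ^ 2 :=
    sq_le_sq.mpr (by rw [abs_norm]; exact abs_re_le_norm _)
  have hcs := hT.norm_inner_sq_le u w
  nlinarith [hT.re_inner_nonneg_left u, sq_nonneg ‖v‖]

end LoewnerOrder

theorem loewner_iff_spectralRadius_le_one_and_range_subset_general
    {H : Type*} [NormedAddCommGroup H] [InnerProductSpace ℂ H] [CompleteSpace H]
    (S T Ssqrt Td : H →L[ℂ] H)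
    (hT : T.IsPositive)
    (hTcr : IsClosed (LinearMap.range (T : H →ₗ[ℂ] H) : Set H))
    (hSsqrt : Ssqrt.IsPositive) (hSsqrt2 : Ssqrt ∘L Ssqrt = S)
    (hTd : IsMoorePenroseInverse T Td) :
    (T - S).IsPositive ↔
      spectralRadius ℂ (Ssqrt ∘L Td ∘L Ssqrt) ≤ 1 ∧
        LinearMap.range (Ssqrt : H →ₗ[ℂ] H) ≤ LinearMap.range (T : H →ₗ[ℂ] H) := by
  subst hSsqrt2
  have hR := hSsqrt.isSelfAdjoint
  have hA : (Ssqrt ∘L Td ∘L Ssqrt).IsPositive := by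
    simpa only [hR.adjoint_eq] using (hTd.isPositive hT).conj_adjoint Ssqrt
  rw [hA.spectralRadius_le_one_iff]
  constructor
  · intro hTR
    have hker : T.ker ≤ Ssqrt.ker :=
      ker_le_ker_of_isPositive_sub (by rwa [hR.adjoint_eq])
    have hRT : Ssqrt.range ≤ T.range := range_le_range_of_ker_adjoint_le hTcr
      (by rwa [hR.adjoint_eq, hT.isSelfAdjoint.adjoint_eq])
    exact ⟨re_inner_comp_moorePenrose_comp_apply_self_le hR hTd hRT hTR, hRT⟩
  · rintro ⟨hle, hRT⟩
    exact isPositive_sub_comp_self_of_re_inner_le hT hR hTd hRT hle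

/-- For positive operators `S, T` with `T` of closed range, `S ≤ T` in the Löwner order iff
`ρ(S^{1/2} T† S^{1/2}) ≤ 1` and `ran(S^{1/2}) ⊆ ran(T)`. -/
theorem loewner_iff_spectralRadius_le_one_and_range_subset
    {H : Type*} [NormedAddCommGroup H] [InnerProductSpace ℂ H] [CompleteSpace H]
    (S T Ssqrt Td : H →L[ℂ] H)
    (hS : S.IsPositive) (hT : T.IsPositive)
    (hTcr : IsClosed (LinearMap.range (T : H →ₗ[ℂ] H) : Set H))
    (hSsqrt : Ssqrt.IsPositive) (hSsqrt2 : Ssqrt ∘L Ssqrt = S)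
    (hTd : IsMoorePenroseInverse T Td) :
    (T - S).IsPositive ↔
      spectralRadius ℂ (Ssqrt ∘L Td ∘L Ssqrt) ≤ 1 ∧
        LinearMap.range (Ssqrt : H →ₗ[ℂ] H) ≤ LinearMap.range (T : H →ₗ[ℂ] H) :=
  loewner_iff_spectralRadius_le_one_and_range_subset_general S T Ssqrt Td hT hTcr hSsqrt hSsqrt2 hTd
end

section
/- Let S, T be self-adjoint closed range operators on a complex Hilbert space with ST = TS and ST of closed range. Then (ST)† = T† S†. -/
/-!
The Penrose equations are purely algebraic, so the argument runs in any star semigroup.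
The Moore–Penrose inverse is unique, and whatever commutes with `a` and `a*` commutes with
`a†`. Hence each of `S, S†` commutes with each of `T, T†`, and then `T† S†` satisfies the four
Penrose equations for `S T`.
-/

open ContinuousLinearMap

structure IsPenroseInverse {R : Type*} [Semigroup R] [StarMul R] (a b : R) : Prop where
  mul_inv_mul : a * b * a = a
  inv_mul_inv : b * a * b = b
  isSelfAdjoint_mul_inv : IsSelfAdjoint (a * b)
  isSelfAdjoint_inv_mul : IsSelfAdjoint (b * a)

namespace IsPenroseInverse

variable {R : Type*} [Semigroup R] [StarMul R] {a b c a' c' x : R}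

theorem unique (hb : IsPenroseInverse a b) (hc : IsPenroseInverse a c) : b = c := by
  have hab : a * b = a * c :=
    calc a * b = a * c * (a * b) := by rw [← mul_assoc, hc.mul_inv_mul]
      _ = star (a * b * (a * c)) := by
          rw [star_mul, hb.isSelfAdjoint_mul_inv.star_eq, hc.isSelfAdjoint_mul_inv.star_eq]
      _ = a * c := by rw [← mul_assoc, hb.mul_inv_mul, hc.isSelfAdjoint_mul_inv.star_eq]
  have hba : b * a = c * a :=
    calc b * a = b * a * (c * a) := by rw [mul_assoc, ← mul_assoc a, hc.mul_inv_mul]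
      _ = star (c * a * (b * a)) := by
          rw [star_mul, hb.isSelfAdjoint_inv_mul.star_eq, hc.isSelfAdjoint_inv_mul.star_eq]
      _ = c * a := by
          rw [mul_assoc, ← mul_assoc a, hb.mul_inv_mul, hc.isSelfAdjoint_inv_mul.star_eq]
  calc b = b * (a * b) := by rw [← mul_assoc, hb.inv_mul_inv]
    _ = c * a * c := by rw [hab, ← mul_assoc, hba]
    _ = c := hc.inv_mul_inv

protected theorem star (h : IsPenroseInverse a b) : IsPenroseInverse (star a) (star b) where
  mul_inv_mul := by simpa only [star_mul, mul_assoc] using congrArg star h.mul_inv_mul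
  inv_mul_inv := by simpa only [star_mul, mul_assoc] using congrArg star h.inv_mul_inv
  isSelfAdjoint_mul_inv := by
    simpa only [star_mul] using IsSelfAdjoint.star_iff.mpr h.isSelfAdjoint_inv_mul
  isSelfAdjoint_inv_mul := by
    simpa only [star_mul] using IsSelfAdjoint.star_iff.mpr h.isSelfAdjoint_mul_inv

/-- The key identity is `(a b) y (a b) = y (a b)` for every `y` commuting with `a`; applied to
`y = star x` and starred, it gives `(a b) x (a b) = (a b) x`. -/
theorem commute_mul_inv (h : IsPenroseInverse a b) (hxa : Commute x a)
    (hxa' : Commute x (star a)) : Commute x (a * b) := by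
  have key : ∀ y, Commute y a → a * b * y * (a * b) = y * (a * b) := fun y hy =>
    calc a * b * y * (a * b) = a * b * (y * a) * b := by simp only [mul_assoc]
      _ = a * b * a * y * b := by rw [hy.eq]; simp only [mul_assoc]
      _ = y * (a * b) := by rw [h.mul_inv_mul, ← hy.eq, mul_assoc]
  have hx' : a * b * x * (a * b) = a * b * x := by
    have := congrArg star (key (star x) (by simpa only [star_star] using hxa'.star_star))
    rwa [star_mul, star_mul (a * b), star_mul (star x), star_star,
      h.isSelfAdjoint_mul_inv.star_eq, ← mul_assoc] at this
  exact (key x hxa).symm.trans hx'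

theorem commute_inv_mul (h : IsPenroseInverse a b) (hxa : Commute x a)
    (hxa' : Commute x (star a)) : Commute x (b * a) := by
  simpa only [← star_mul, h.isSelfAdjoint_inv_mul.star_eq] using
    h.star.commute_mul_inv hxa' (by rwa [star_star])

theorem commute_of_commute (h : IsPenroseInverse a b) (hxa : Commute x a)
    (hxa' : Commute x (star a)) : Commute x b := by
  have hp := (h.commute_mul_inv hxa hxa').eq
  have hq := (h.commute_inv_mul hxa hxa').eq
  refine Commute.symm ?_
  calc b * x = b * a * b * x := by rw [h.inv_mul_inv]
    _ = b * (x * (a * b)) := by rw [hp]; simp only [mul_assoc]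
    _ = b * a * x * b := by rw [← mul_assoc x, hxa.eq]; simp only [mul_assoc]
    _ = x * (b * a) * b := by rw [hq]
    _ = x * b := by rw [mul_assoc x, h.inv_mul_inv]

theorem commute_of_commute_of_isSelfAdjoint (h : IsPenroseInverse a b) (ha : IsSelfAdjoint a)
    (hxa : Commute x a) : Commute x b :=
  h.commute_of_commute hxa (by rwa [ha.star_eq])

theorem mul_of_commute (ha : IsPenroseInverse a a') (hc : IsPenroseInverse c c')
    (hac : Commute a c) (hac' : Commute a c') (ha'c : Commute a' c) (ha'c' : Commute a' c') :
    IsPenroseInverse (a * c) (c' * a') := by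
  have hmul : a * c * (c' * a') = a * a' * (c * c') :=
    calc a * c * (c' * a') = a * (c * c' * a') := by simp only [mul_assoc]
      _ = a * a' * (c * c') := by rw [← (ha'c.mul_right ha'c').eq, mul_assoc]
  have hmul' : c' * a' * (a * c) = a' * a * (c' * c) :=
    calc c' * a' * (a * c) = c' * (a' * a) * c := by simp only [mul_assoc]
      _ = a' * a * (c' * c) := by rw [← (ha'c'.mul_left hac').eq, mul_assoc]
  refine ⟨?_, ?_, ?_, ?_⟩
  · calc a * c * (c' * a') * (a * c) = a * a' * (c * c' * a) * c := by
          rw [hmul]; simp only [mul_assoc]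
      _ = a * a' * a * (c * c' * c) := by
          rw [(hac.mul_right hac').symm.eq]; simp only [mul_assoc]
      _ = a * c := by rw [ha.mul_inv_mul, hc.mul_inv_mul]
  · calc c' * a' * (a * c) * (c' * a') = a' * a * (c' * c * c') * a' := by
          rw [hmul']; simp only [mul_assoc]
      _ = a' * a * a' * c' := by
          rw [hc.inv_mul_inv, mul_assoc _ c', ha'c'.symm.eq]; simp only [mul_assoc]
      _ = c' * a' := by rw [ha.inv_mul_inv, ha'c'.eq]
  · rw [hmul]
    exact (ha.isSelfAdjoint_mul_inv.commute_iff hc.isSelfAdjoint_mul_inv).mp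
      ((hac.mul_right hac').mul_left (ha'c.mul_right ha'c'))
  · rw [hmul']
    exact (ha.isSelfAdjoint_inv_mul.commute_iff hc.isSelfAdjoint_inv_mul).mp
      ((ha'c'.mul_right ha'c).mul_left (hac'.mul_right hac))

end IsPenroseInverse

theorem IsMoorePenroseInverse.isPenroseInverse {H : Type*} [NormedAddCommGroup H]
    [InnerProductSpace ℂ H] [CompleteSpace H] {T Td : H →L[ℂ] H}
    (h : IsMoorePenroseInverse T Td) : IsPenroseInverse T Td :=
  ⟨(mul_assoc T Td T).trans h.1, (mul_assoc Td T Td).trans h.2.1, h.2.2.1, h.2.2.2⟩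

theorem mp_inverse_of_commuting_selfAdjoint_general
    {H : Type*} [NormedAddCommGroup H] [InnerProductSpace ℂ H] [CompleteSpace H]
    (S T Sd Td STd : H →L[ℂ] H)
    (hS : IsSelfAdjoint S) (hT : IsSelfAdjoint T)
    (hcomm : S ∘L T = T ∘L S)
    (hSd : IsMoorePenroseInverse S Sd) (hTd : IsMoorePenroseInverse T Td)
    (hSTd : IsMoorePenroseInverse (S ∘L T) STd) :
    STd = Td ∘L Sd := by
  have hS' := hSd.isPenroseInverse
  have hT' := hTd.isPenroseInverse
  have hS_T : Commute S T := hcomm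
  have hS_Td : Commute S Td := hT'.commute_of_commute_of_isSelfAdjoint hT hS_T
  have hSd_T : Commute Sd T := (hS'.commute_of_commute_of_isSelfAdjoint hS hS_T.symm).symm
  have hSd_Td : Commute Sd Td := (hS'.commute_of_commute_of_isSelfAdjoint hS hS_Td.symm).symm
  exact hSTd.isPenroseInverse.unique (hS'.mul_of_commute hT' hS_T hS_Td hSd_T hSd_Td)

/-- For commuting self-adjoint closed range operators with `ST` of closed range,
`(ST)† = T† S†`. -/
theorem mp_inverse_of_commuting_selfAdjoint
    {H : Type*} [NormedAddCommGroup H] [InnerProductSpace ℂ H] [CompleteSpace H]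
    (S T Sd Td STd : H →L[ℂ] H)
    (hS : IsSelfAdjoint S) (hT : IsSelfAdjoint T)
    (hScr : IsClosed (LinearMap.range (S : H →ₗ[ℂ] H) : Set H))
    (hTcr : IsClosed (LinearMap.range (T : H →ₗ[ℂ] H) : Set H))
    (hcomm : S ∘L T = T ∘L S)
    (hSTcr : IsClosed (LinearMap.range ((S ∘L T : H →L[ℂ] H) : H →ₗ[ℂ] H) : Set H))
    (hSd : IsMoorePenroseInverse S Sd) (hTd : IsMoorePenroseInverse T Td)
    (hSTd : IsMoorePenroseInverse (S ∘L T) STd) :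
    STd = Td ∘L Sd :=
  mp_inverse_of_commuting_selfAdjoint_general S T Sd Td STd hS hT hcomm hSd hTd hSTd
end

section
/- Let T be a bounded operator with closed range on a complex Hilbert space and let T = U − V be a proper splitting. Then ker(U† V) = ker(V). -/
/-! `V = U - T` has range inside `ran T = ran U`, and `U U†` fixes `ran U` pointwise, so `U†` is
injective on `ran V`. -/

open ContinuousLinearMap

namespace LinearMap

variable {R M N P : Type*} [Ring R] [AddCommGroup M] [AddCommGroup N] [AddCommGroup P]
  [Module R M] [Module R N] [Module R P]

theorem range_sub_le_of_range_le {f g : M →ₗ[R] N} (hg : range g ≤ range f) :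
    range (f - g) ≤ range f := by
  rw [sub_eq_add_neg]
  calc range (f + -g) ≤ range f ⊔ range (-g) := range_add_le f (-g)
    _ = range f := by rw [range_neg, sup_eq_left.mpr hg]

theorem ker_comp_eq_ker_of_range_le {u : M →ₗ[R] N} {ud : N →ₗ[R] M} (hu : u ∘ₗ ud ∘ₗ u = u)
    {v : P →ₗ[R] N} (hv : range v ≤ range u) : ker (ud ∘ₗ v) = ker v := by
  refine le_antisymm (fun x hx => ?_) (ker_le_ker_comp v ud)
  obtain ⟨w, hw⟩ := hv (mem_range_self v x)
  have hfix : u (ud (v x)) = v x := by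
    rw [← hw]
    exact congrArg (· w) hu
  rw [mem_ker, comp_apply] at hx
  rw [mem_ker, ← hfix, hx, map_zero]

end LinearMap

theorem ker_Ud_comp_V_eq_ker_V_general
    {H : Type*} [NormedAddCommGroup H] [InnerProductSpace ℂ H] [CompleteSpace H]
    (T U V Ud : H →L[ℂ] H)
    (hsplit : T = U - V)
    (hran : LinearMap.range (U : H →ₗ[ℂ] H) = LinearMap.range (T : H →ₗ[ℂ] H))
    (hUd : IsMoorePenroseInverse U Ud) :
    LinearMap.ker ((Ud ∘L V : H →L[ℂ] H) : H →ₗ[ℂ] H) = LinearMap.ker (V : H →ₗ[ℂ] H) := by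
  have hV : (V : H →ₗ[ℂ] H) = U - T := by
    rw [hsplit, toLinearMap_sub, sub_sub_cancel]
  have hVran : LinearMap.range (V : H →ₗ[ℂ] H) ≤ LinearMap.range (U : H →ₗ[ℂ] H) := by
    rw [hV]
    exact LinearMap.range_sub_le_of_range_le hran.ge
  have hUUdU : (U : H →ₗ[ℂ] H) ∘ₗ (Ud : H →ₗ[ℂ] H) ∘ₗ (U : H →ₗ[ℂ] H) = U :=
    congrArg toLinearMap hUd.1
  rw [toLinearMap_comp]
  exact LinearMap.ker_comp_eq_ker_of_range_le hUUdU hVran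

/-- For a proper splitting `T = U - V` of a closed range operator, `ker(U† V) = ker V`. -/
theorem ker_Ud_comp_V_eq_ker_V
    {H : Type*} [NormedAddCommGroup H] [InnerProductSpace ℂ H] [CompleteSpace H]
    (T U V Ud : H →L[ℂ] H)
    (hTcr : IsClosed (LinearMap.range (T : H →ₗ[ℂ] H) : Set H))
    (hsplit : T = U - V)
    (hran : LinearMap.range (U : H →ₗ[ℂ] H) = LinearMap.range (T : H →ₗ[ℂ] H))
    (hker : LinearMap.ker (U : H →ₗ[ℂ] H) = LinearMap.ker (T : H →ₗ[ℂ] H))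
    (hUd : IsMoorePenroseInverse U Ud) :
    LinearMap.ker ((Ud ∘L V : H →L[ℂ] H) : H →ₗ[ℂ] H) = LinearMap.ker (V : H →ₗ[ℂ] H) :=
  ker_Ud_comp_V_eq_ker_V_general T U V Ud hsplit hran hUd
end

section
/- Let T be a bounded operator with closed range on a complex Hilbert space and let T = U − V be a proper splitting. Then I − U† V is invertible in L(H) and T† = (I − U† V)^{-1} U†. -/
open ContinuousLinearMap

/-! `A†A` and `AA†` are the orthogonal projections with kernel `ker A` and range `ran A`
respectively, and an orthogonal projection is determined by its kernel as well as by its range.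
A proper splitting therefore gives `U†U = T†T` and `UU† = TT†`. With `V = U - T` these yield
`U†VT† = T†VU† = T† - U†`, and expanding shows that `1 + T†V` is a two-sided inverse of
`1 - U†V` and that `(1 - U†V)T† = U†`. -/

section Ring

variable {R : Type*} [Ring R]

theorem mul_sub_mul_eq_sub_of_mul_eq_of_mul_eq {t u t' u' : R} (ht : t' * (t * t') = t')
    (hu : u' * (u * u') = u') (hl : u' * u = t' * t) (hr : u * u' = t * t') :
    u' * (u - t) * t' = t' - u' :=
  calc u' * (u - t) * t' = (u' * u) * t' - u' * (t * t') := by noncomm_ring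
    _ = t' * (t * t') - u' * (u * u') := by rw [hl, hr, mul_assoc]
    _ = t' - u' := by rw [ht, hu]

theorem isUnit_one_sub_mul_of_mul_mul_eq_sub {a b c : R} (h₁ : a * c * b = b - a)
    (h₂ : b * c * a = b - a) : IsUnit (1 - a * c) := by
  refine ⟨⟨1 - a * c, 1 + b * c, ?_, ?_⟩, rfl⟩
  · calc (1 - a * c) * (1 + b * c) = 1 + (b - a) * c - (a * c * b) * c := by noncomm_ring
      _ = 1 := by rw [h₁, add_sub_cancel_right]
  · calc (1 + b * c) * (1 - a * c) = 1 + (b - a) * c - (b * c * a) * c := by noncomm_ring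
      _ = 1 := by rw [h₂, add_sub_cancel_right]

end Ring

namespace ContinuousLinearMap

variable {𝕜 E : Type*} [RCLike 𝕜] [NormedAddCommGroup E] [InnerProductSpace 𝕜 E] [CompleteSpace E]

theorem IsStarProjection.ext_of_ker_eq {P Q : E →L[𝕜] E} (hP : IsStarProjection P)
    (hQ : IsStarProjection Q) (h : LinearMap.ker (P : E →ₗ[𝕜] E) = LinearMap.ker (Q : E →ₗ[𝕜] E)) :
    P = Q := by
  have range_one_sub : ∀ {R : E →L[𝕜] E}, IsStarProjection R →
      LinearMap.range ((1 - R : E →L[𝕜] E) : E →ₗ[𝕜] E) = LinearMap.ker (R : E →ₗ[𝕜] E) :=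
    fun hR ↦ by
      rw [toLinearMap_sub, toLinearMap_one,
        LinearMap.IsIdempotentElem.ker_eq_range_one_sub hR.isIdempotentElem.toLinearMap]
  simpa using IsStarProjection.ext hP.one_sub hQ.one_sub
    (by rw [range_one_sub hP, range_one_sub hQ, h])

end ContinuousLinearMap

namespace IsMoorePenroseInverse

variable {H : Type*} [NormedAddCommGroup H] [InnerProductSpace ℂ H] [CompleteSpace H]
  {A Ad B Bd : H →L[ℂ] H}

theorem isStarProjection_self_comp (h : IsMoorePenroseInverse A Ad) :
    IsStarProjection (A ∘L Ad) :=
  ⟨congr(A ∘L $(h.2.1)), h.2.2.1⟩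

theorem isStarProjection_comp_self (h : IsMoorePenroseInverse A Ad) :
    IsStarProjection (Ad ∘L A) :=
  ⟨congr(Ad ∘L $(h.1)), h.2.2.2⟩

theorem range_self_comp (h : IsMoorePenroseInverse A Ad) :
    LinearMap.range (A ∘L Ad : H →ₗ[ℂ] H) = LinearMap.range (A : H →ₗ[ℂ] H) := by
  refine le_antisymm (LinearMap.range_comp_le_range _ _) ?_
  rintro _ ⟨x, rfl⟩
  exact ⟨A x, congr($(h.1) x)⟩

theorem ker_comp_self (h : IsMoorePenroseInverse A Ad) :
    LinearMap.ker (Ad ∘L A : H →ₗ[ℂ] H) = LinearMap.ker (A : H →ₗ[ℂ] H) := by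
  refine le_antisymm (fun x hx ↦ ?_) (LinearMap.ker_le_ker_comp _ _)
  have hx : Ad (A x) = 0 := hx
  rw [LinearMap.mem_ker, coe_coe, ← congr($(h.1) x)]
  simp [hx]

theorem comp_self_eq_of_ker_eq (hA : IsMoorePenroseInverse A Ad) (hB : IsMoorePenroseInverse B Bd)
    (h : LinearMap.ker (A : H →ₗ[ℂ] H) = LinearMap.ker (B : H →ₗ[ℂ] H)) :
    Ad ∘L A = Bd ∘L B :=
  hA.isStarProjection_comp_self.ext_of_ker_eq hB.isStarProjection_comp_self <| by
    rw [hA.ker_comp_self, hB.ker_comp_self, h]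

theorem self_comp_eq_of_range_eq (hA : IsMoorePenroseInverse A Ad)
    (hB : IsMoorePenroseInverse B Bd)
    (h : LinearMap.range (A : H →ₗ[ℂ] H) = LinearMap.range (B : H →ₗ[ℂ] H)) :
    A ∘L Ad = B ∘L Bd :=
  hA.isStarProjection_self_comp.ext hB.isStarProjection_self_comp <| by
    rw [hA.range_self_comp, hB.range_self_comp, h]

end IsMoorePenroseInverse

theorem Td_eq_inv_comp_Ud_general
    {H : Type*} [NormedAddCommGroup H] [InnerProductSpace ℂ H] [CompleteSpace H]
    (T U V Ud Td : H →L[ℂ] H)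
    (hsplit : T = U - V)
    (hran : LinearMap.range (U : H →ₗ[ℂ] H) = LinearMap.range (T : H →ₗ[ℂ] H))
    (hker : LinearMap.ker (U : H →ₗ[ℂ] H) = LinearMap.ker (T : H →ₗ[ℂ] H))
    (hUd : IsMoorePenroseInverse U Ud) (hTd : IsMoorePenroseInverse T Td) :
    IsUnit (1 - Ud ∘L V) ∧ (1 - Ud ∘L V) ∘L Td = Ud := by
  have hV : V = U - T := by rw [hsplit, sub_sub_cancel]
  have hl : Ud * U = Td * T := hUd.comp_self_eq_of_ker_eq hTd hker
  have hr : U * Ud = T * Td := hUd.self_comp_eq_of_range_eq hTd hran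
  have h₁ : Ud * V * Td = Td - Ud := hV ▸
    mul_sub_mul_eq_sub_of_mul_eq_of_mul_eq hTd.2.1 hUd.2.1 hl hr
  have h₂ : Td * V * Ud = Td - Ud := by
    rw [hV, ← neg_sub, mul_neg, neg_mul,
      mul_sub_mul_eq_sub_of_mul_eq_of_mul_eq hUd.2.1 hTd.2.1 hl.symm hr.symm, neg_sub]
  refine ⟨isUnit_one_sub_mul_of_mul_mul_eq_sub h₁ h₂, ?_⟩
  change (1 - Ud * V) * Td = Ud
  rw [sub_mul, one_mul, h₁, sub_sub_cancel]

/-- For a proper splitting `T = U - V` of a closed range operator, `I - U†V` is invertible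
and `T† = (I - U†V)⁻¹ U†`. -/
theorem Td_eq_inv_comp_Ud
    {H : Type*} [NormedAddCommGroup H] [InnerProductSpace ℂ H] [CompleteSpace H]
    (T U V Ud Td : H →L[ℂ] H)
    (hTcr : IsClosed (LinearMap.range (T : H →ₗ[ℂ] H) : Set H))
    (hsplit : T = U - V)
    (hran : LinearMap.range (U : H →ₗ[ℂ] H) = LinearMap.range (T : H →ₗ[ℂ] H))
    (hker : LinearMap.ker (U : H →ₗ[ℂ] H) = LinearMap.ker (T : H →ₗ[ℂ] H))
    (hUd : IsMoorePenroseInverse U Ud) (hTd : IsMoorePenroseInverse T Td) :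
    IsUnit (1 - Ud ∘L V) ∧ (1 - Ud ∘L V) ∘L Td = Ud :=
  Td_eq_inv_comp_Ud_general T U V Ud Td hsplit hran hker hUd hTd
end

section
/- Let T be a bounded operator with closed range on a complex Hilbert space and let T = U − V be a proper splitting. Then the following are equivalent: (i) T† V is compact; (ii) U† V is compact; (iii) V is compact. -/
/-!
Since `V = U - T`, the range of `V` lies in `ran T = ran U`. An inner
inverse `B` of `A` (`A B A = A`) satisfies `A B V = V` whenever `ran V ⊆ ran A`, so `V` and `B V`
are compact together; apply this with `(A, B) = (T, T†)` and `(U, U†)`.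
-/

open ContinuousLinearMap

theorem LinearMap.range_le_of_eq_sub {R M N : Type*} [Ring R] [AddCommGroup M] [AddCommGroup N]
    [Module R M] [Module R N] {T U V : M →ₗ[R] N} (hsplit : T = U - V)
    (hran : range U = range T) : range V ≤ range T := by
  rintro _ ⟨x, rfl⟩
  have hVx : V x = U x - T x := by simp [hsplit]
  rw [hVx]
  exact sub_mem (hran ▸ mem_range_self U x) (mem_range_self T x)

namespace ContinuousLinearMap

variable {R E F G : Type*} [Ring R] [TopologicalSpace E] [AddCommGroup E] [Module R E]
  [TopologicalSpace F] [AddCommGroup F] [Module R F] [TopologicalSpace G] [AddCommGroup G]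
  [Module R G] {A : G →L[R] F} {B : F →L[R] G}

theorem apply_apply_of_comp_comp_eq (hA : A ∘L B ∘L A = A) {y : F}
    (hy : y ∈ LinearMap.range (A : G →ₗ[R] F)) : A (B y) = y := by
  obtain ⟨x, rfl⟩ := hy
  exact congr($hA x)

theorem comp_comp_eq_of_range_le (hA : A ∘L B ∘L A = A) {V : E →L[R] F}
    (hV : LinearMap.range (V : E →ₗ[R] F) ≤ LinearMap.range (A : G →ₗ[R] F)) :
    A ∘L B ∘L V = V :=
  ext fun x => apply_apply_of_comp_comp_eq hA (hV ⟨x, rfl⟩)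

theorem isCompactOperator_comp_iff_of_range_le (hA : A ∘L B ∘L A = A) {V : E →L[R] F}
    (hV : LinearMap.range (V : E →ₗ[R] F) ≤ LinearMap.range (A : G →ₗ[R] F)) :
    IsCompactOperator ⇑(B ∘L V) ↔ IsCompactOperator ⇑V := by
  refine ⟨fun h => ?_, fun h => h.clm_comp B⟩
  rw [← comp_comp_eq_of_range_le hA hV]
  exact h.clm_comp A

end ContinuousLinearMap

theorem compact_tfae_of_proper_splitting_general
    {H : Type*} [NormedAddCommGroup H] [InnerProductSpace ℂ H] [CompleteSpace H]
    (T U V Ud Td : H →L[ℂ] H)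
    (hsplit : T = U - V)
    (hran : LinearMap.range (U : H →ₗ[ℂ] H) = LinearMap.range (T : H →ₗ[ℂ] H))
    (hUd : IsMoorePenroseInverse U Ud) (hTd : IsMoorePenroseInverse T Td) :
    (IsCompactOperator ⇑(Td ∘L V) ↔ IsCompactOperator ⇑(Ud ∘L V)) ∧
      (IsCompactOperator ⇑(Ud ∘L V) ↔ IsCompactOperator ⇑V) := by
  have hVT : LinearMap.range (V : H →ₗ[ℂ] H) ≤ LinearMap.range (T : H →ₗ[ℂ] H) :=
    LinearMap.range_le_of_eq_sub (by rw [hsplit, toLinearMap_sub]) hran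
  have hVU : LinearMap.range (V : H →ₗ[ℂ] H) ≤ LinearMap.range (U : H →ₗ[ℂ] H) := hran ▸ hVT
  have hU := isCompactOperator_comp_iff_of_range_le hUd.1 hVU
  exact ⟨(isCompactOperator_comp_iff_of_range_le hTd.1 hVT).trans hU.symm, hU⟩

/-- For a proper splitting `T = U - V` of a closed range operator, the following are
equivalent: `T†V` compact, `U†V` compact, `V` compact. -/
theorem compact_tfae_of_proper_splitting
    {H : Type*} [NormedAddCommGroup H] [InnerProductSpace ℂ H] [CompleteSpace H]
    (T U V Ud Td : H →L[ℂ] H)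
    (hTcr : IsClosed (LinearMap.range (T : H →ₗ[ℂ] H) : Set H))
    (hsplit : T = U - V)
    (hran : LinearMap.range (U : H →ₗ[ℂ] H) = LinearMap.range (T : H →ₗ[ℂ] H))
    (hker : LinearMap.ker (U : H →ₗ[ℂ] H) = LinearMap.ker (T : H →ₗ[ℂ] H))
    (hUd : IsMoorePenroseInverse U Ud) (hTd : IsMoorePenroseInverse T Td) :
    (IsCompactOperator ⇑(Td ∘L V) ↔ IsCompactOperator ⇑(Ud ∘L V)) ∧
      (IsCompactOperator ⇑(Ud ∘L V) ↔ IsCompactOperator ⇑V) :=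
  compact_tfae_of_proper_splitting_general T U V Ud Td hsplit hran hUd hTd
end

section
/- Let T be a bounded operator with closed range on a complex Hilbert space, with polar decomposition T = U_T |T| where U_T is the partial isometry with ker(U_T) = ker(T), and set V = U_T − T. Then U_T* V is a positive operator if and only if ‖T‖ ≤ 1. -/
open ContinuousLinearMap

/-!
Let `P = U_T* U_T` and `R = |T|`. Since `U_T U_T* U_T = U_T`, `P` is an orthogonal projection
and `x - P x ∈ ker U_T = ker T = ker R` for all `x`; hence `R P = R = P R`, so
`U_T* V = P - P R = P - R`. Positivity of `P - R` means `R ≤ P`. As `P ≤ 1` this forces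
`R ≤ 1`, i.e. `‖T‖ = ‖R‖ ≤ 1`; conversely `R ≤ 1` gives `R = P R P ≤ P 1 P = P`.
-/

theorem isStarProjection_star_mul_self {R : Type*} [Semigroup R] [StarMul R] {u : R}
    (hu : u * star u * u = u) : IsStarProjection (star u * u) where
  isIdempotentElem := by rw [IsIdempotentElem, mul_assoc, ← mul_assoc u, hu]
  isSelfAdjoint := .star_mul_self u

theorem IsStarProjection.le_iff_norm_le_one_of_mul_eq {A : Type*} [CStarAlgebra A]
    [PartialOrder A] [StarOrderedRing A] {p a : A} (hp : IsStarProjection p) (ha : 0 ≤ a)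
    (hpa : p * a = a) : a ≤ p ↔ ‖a‖ ≤ 1 := by
  rw [CStarAlgebra.norm_le_one_iff_of_nonneg a ha]
  refine ⟨fun h => h.trans hp.le_one, fun h => ?_⟩
  have hap : a * p = a := by
    simpa [hp.isSelfAdjoint.star_eq, (IsSelfAdjoint.of_nonneg ha).star_eq] using congrArg star hpa
  calc a = p * a * p := by rw [hpa, hap]
    _ ≤ p * 1 * p := hp.isSelfAdjoint.conjugate_le_conjugate h
    _ = p := by rw [mul_one, hp.isIdempotentElem.eq]

section InnerProductSpace

variable {𝕜 E F : Type*} [RCLike 𝕜]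
  [NormedAddCommGroup E] [InnerProductSpace 𝕜 E] [CompleteSpace E]
  [NormedAddCommGroup F] [InnerProductSpace 𝕜 F] [CompleteSpace F]

namespace ContinuousLinearMap

theorem comp_adjoint_comp_self_of_ker_le {G : Type*} [NormedAddCommGroup G] [NormedSpace 𝕜 G]
    {U : E →L[𝕜] F} {S : E →L[𝕜] G}
    (hU : U ∘L adjoint U ∘L U = U) (hker : U.ker ≤ S.ker) : S ∘L (adjoint U ∘L U) = S := by
  ext x
  have hx : x - adjoint U (U x) ∈ U.ker := by
    simpa [LinearMap.mem_ker, sub_eq_zero] using (congrArg (· x) hU).symm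
  have hSx : S x - S (adjoint U (U x)) = 0 := by simpa using hker hx
  simpa using (sub_eq_zero.mp hSx).symm

variable {G : Type*} [NormedAddCommGroup G] [InnerProductSpace 𝕜 G] [CompleteSpace G]

theorem ker_eq_of_adjoint_comp_self_eq {S : E →L[𝕜] F} {T : E →L[𝕜] G}
    (h : adjoint S ∘L S = adjoint T ∘L T) : S.ker = T.ker := by
  rw [← ker_adjoint_comp_self S, h, ker_adjoint_comp_self]

theorem norm_eq_of_adjoint_comp_self_eq {S : E →L[𝕜] F} {T : E →L[𝕜] G}
    (h : adjoint S ∘L S = adjoint T ∘L T) : ‖S‖ = ‖T‖ := by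
  have := norm_adjoint_comp_self S
  rw [h, norm_adjoint_comp_self] at this
  exact (mul_self_inj (norm_nonneg _) (norm_nonneg _)).mp this.symm

end ContinuousLinearMap

end InnerProductSpace

theorem polar_splitting_positive_iff_norm_le_one_general
    {H : Type*} [NormedAddCommGroup H] [InnerProductSpace ℂ H] [CompleteSpace H]
    (T UT R : H →L[ℂ] H)
    (hR : R.IsPositive) (hR2 : R ∘L R = adjoint T ∘L T)
    (hpolar : T = UT ∘L R)
    (hpi : UT ∘L adjoint UT ∘L UT = UT)
    (hkerU : LinearMap.ker (UT : H →ₗ[ℂ] H) = LinearMap.ker (T : H →ₗ[ℂ] H)) :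
    (adjoint UT ∘L (UT - T)).IsPositive ↔ ‖T‖ ≤ 1 := by
  set P := adjoint UT ∘L UT
  have hRR : adjoint R ∘L R = adjoint T ∘L T := by rw [hR.isSelfAdjoint.adjoint_eq, hR2]
  have hP : IsStarProjection P := isStarProjection_star_mul_self (by rw [mul_assoc]; exact hpi)
  have hRP : R ∘L P = R :=
    comp_adjoint_comp_self_of_ker_le hpi (by
      rw [ker_eq_of_adjoint_comp_self_eq hRR]; exact hkerU.le)
  have hPR : P ∘L R = R := by
    simpa [P, hR.isSelfAdjoint.adjoint_eq] using congrArg adjoint hRP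
  have hsplit : adjoint UT ∘L (UT - T) = P - R := by
    rw [comp_sub, hpolar, ← comp_assoc, hPR]
  rw [hsplit, ← le_def, ← norm_eq_of_adjoint_comp_self_eq hRR]
  exact hP.le_iff_norm_le_one_of_mul_eq ((nonneg_iff_isPositive R).mpr hR) hPR

/-- For the polar proper splitting `T = U_T - V` with `V = U_T - T`, the operator
`U_T* V` is positive iff `‖T‖ ≤ 1`. -/
theorem polar_splitting_positive_iff_norm_le_one
    {H : Type*} [NormedAddCommGroup H] [InnerProductSpace ℂ H] [CompleteSpace H]
    (T UT R : H →L[ℂ] H)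
    (hTcr : IsClosed (LinearMap.range (T : H →ₗ[ℂ] H) : Set H))
    (hR : R.IsPositive) (hR2 : R ∘L R = adjoint T ∘L T)
    (hpolar : T = UT ∘L R)
    (hpi : UT ∘L adjoint UT ∘L UT = UT)
    (hkerU : LinearMap.ker (UT : H →ₗ[ℂ] H) = LinearMap.ker (T : H →ₗ[ℂ] H)) :
    (adjoint UT ∘L (UT - T)).IsPositive ↔ ‖T‖ ≤ 1 :=
  polar_splitting_positive_iff_norm_le_one_general T UT R hR hR2 hpolar hpi hkerU
end

section
/- Let T be a bounded operator with closed range on a complex Hilbert space and T = U_T − V its polar proper splitting. Then the following are equivalent: (i) ρ(U_T* V) < 1; (ii) ‖U_T − T‖ < 1; (iii) ‖P_{T*} − |T|‖ < 1; (iv) ‖T‖ < 2. -/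
/-!
The polar factor `U_T` is a partial isometry whose initial projection `U_T* U_T` has kernel
`ker T`, so it equals `P = P_{T*}`; moreover `|T| P = P |T| = |T|`. Hence
`U_T* (U_T - T) = P - |T|` is self-adjoint, so its spectral radius is its norm, and
`‖(U_T - T) x‖ = ‖U_T (1 - |T|) x‖ = ‖P (1 - |T|) x‖ = ‖(P - |T|) x‖`. This gives
(i) ⇔ (iii) ⇔ (ii), and (iii) ⇒ (iv) because `‖|T|‖ = ‖T‖` and `‖P‖ ≤ 1`.
For (iv) ⇒ (iii): closed range means `γ(T) > 0`, so `|T|` is bounded below on `ran P` and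
`⟪|T| y, y⟫ ≥ δ ‖y‖²` there, while for any positive `R` one has
`‖y - R y‖² ≤ ‖y‖² - (2 - ‖R‖) ⟪R y, y⟫`; with `‖|T|‖ < 2` this makes `P - |T|` a strict
contraction.
-/

open ContinuousLinearMap

open scoped InnerProductSpace
open RCLike

namespace ContinuousLinearMap

lemma comp_eq_self_of_ker_le {R M M₂ : Type*} [Ring R] [AddCommGroup M] [Module R M]
    [TopologicalSpace M] [AddCommGroup M₂] [Module R M₂] [TopologicalSpace M₂]
    {P : M →L[R] M} {A : M →L[R] M₂} (hP : IsIdempotentElem P) (h : P.ker ≤ A.ker) :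
    A ∘L P = A := by
  ext x
  have hx : P x - x ∈ P.ker := by
    rw [LinearMap.mem_ker, coe_coe, map_sub, sub_eq_zero]
    exact congr($(hP.eq) x)
  simpa [sub_eq_zero] using h hx

lemma opNorm_le_sqrt_of_norm_apply_sq_le {𝕜 E F : Type*} [NontriviallyNormedField 𝕜]
    [SeminormedAddCommGroup E] [SeminormedAddCommGroup F] [NormedSpace 𝕜 E] [NormedSpace 𝕜 F]
    {A : E →L[𝕜] F} {c : ℝ} (h : ∀ x, ‖A x‖ ^ 2 ≤ c * ‖x‖ ^ 2) : ‖A‖ ≤ √c :=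
  opNorm_le_bound _ (Real.sqrt_nonneg c) fun x => by
    rw [← Real.sqrt_sq (norm_nonneg (A x)), ← Real.sqrt_sq (norm_nonneg x),
      ← Real.sqrt_mul' c (sq_nonneg _)]
    exact Real.sqrt_le_sqrt (h x)

section Hilbert

variable {𝕜 E : Type*} [RCLike 𝕜] [NormedAddCommGroup E] [InnerProductSpace 𝕜 E]
  [CompleteSpace E]

lemma norm_apply_eq_of_adjoint_comp_self_eq {F : Type*} [NormedAddCommGroup F]
    [InnerProductSpace 𝕜 F] [CompleteSpace F] {A B : E →L[𝕜] F}
    (h : adjoint A ∘L A = adjoint B ∘L B) (x : E) : ‖A x‖ = ‖B x‖ := by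
  rw [apply_norm_eq_sqrt_inner_adjoint_left, h, ← apply_norm_eq_sqrt_inner_adjoint_left]

lemma isStarProjection_adjoint_comp_self {F : Type*} [NormedAddCommGroup F]
    [InnerProductSpace 𝕜 F] [CompleteSpace F] {A : E →L[𝕜] F}
    (hA : A ∘L adjoint A ∘L A = A) : IsStarProjection (adjoint A ∘L A) := by
  refine ⟨?_, ?_⟩
  · change (adjoint A ∘L A) ∘L (adjoint A ∘L A) = adjoint A ∘L A
    rw [comp_assoc, hA]
  · rw [isSelfAdjoint_iff', adjoint_comp, adjoint_adjoint]

lemma IsStarProjection.ker_eq_orthogonal_range {P : E →L[𝕜] E} (hP : IsStarProjection P) :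
    P.ker = P.rangeᗮ := by
  obtain ⟨_, hP'⟩ := isStarProjection_iff_eq_starProjection_range.mp hP
  conv_lhs => rw [hP']
  exact Submodule.ker_starProjection _

lemma IsStarProjection.eq_of_ker_eq {P Q : E →L[𝕜] E} (hP : IsStarProjection P)
    (hQ : IsStarProjection Q) (h : P.ker = Q.ker) : P = Q := by
  have hPQ : P ∘L Q = P := comp_eq_self_of_ker_le hQ.isIdempotentElem h.ge
  have hQP : Q ∘L P = Q := comp_eq_self_of_ker_le hP.isIdempotentElem h.le
  calc P = adjoint (P ∘L Q) := by rw [hPQ, hP.isSelfAdjoint.adjoint_eq]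
    _ = Q := by rw [adjoint_comp, hP.isSelfAdjoint.adjoint_eq, hQ.isSelfAdjoint.adjoint_eq, hQP]

lemma exists_norm_le_mul_norm_apply_of_isClosed_range {F : Type*} [NormedAddCommGroup F]
    [NormedSpace 𝕜 F] [CompleteSpace F] (T : E →L[𝕜] F) (hT : IsClosed (T.range : Set F)) :
    ∃ C : ℝ, ∀ y ∈ T.kerᗮ, ‖y‖ ≤ C * ‖T y‖ := by
  set f : T.kerᗮ →L[𝕜] F := T ∘L T.kerᗮ.subtypeL
  have hinj : Function.Injective f := by
    refine (injective_iff_map_eq_zero f).mpr fun ⟨y, hy⟩ hfy => Subtype.ext ?_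
    exact inner_self_eq_zero.mp (Submodule.inner_right_of_mem_orthogonal (K := T.ker) hfy hy)
  have hrange : Set.range f = T.range := by
    refine subset_antisymm (Set.range_subset_iff.mpr fun y => ⟨y, rfl⟩) ?_
    rintro _ ⟨x, rfl⟩
    obtain ⟨a, ha, b, hb, rfl⟩ := T.ker.exists_add_mem_mem_orthogonal x
    have hTa : T a = 0 := ha
    exact ⟨⟨b, hb⟩, by simp [f, hTa]⟩
  obtain ⟨K, hK⟩ := f.antilipschitz_of_injective_of_isClosed_range hinj (hrange ▸ hT)
  exact ⟨K, fun y hy => hK.le_mul_norm (map_zero f) ⟨y, hy⟩⟩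

end Hilbert

section Positive

variable {H : Type*} [NormedAddCommGroup H] [InnerProductSpace ℂ H] [CompleteSpace H]

lemma IsPositive.norm_apply_sq_le {R : H →L[ℂ] H} (hR : R.IsPositive) (x : H) :
    ‖R x‖ ^ 2 ≤ ‖R‖ * re ⟪R x, x⟫_ℂ := by
  have hR₀ : 0 ≤ R := (nonneg_iff_isPositive R).mpr hR
  set S := CFC.sqrt R
  have hSS : S ∘L S = R := CFC.sqrt_mul_sqrt_self R
  have hS : IsSelfAdjoint S := (CFC.sqrt_nonneg R).isSelfAdjoint
  have hSx : ‖S x‖ ^ 2 = re ⟪R x, x⟫_ℂ := by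
    rw [apply_norm_sq_eq_inner_adjoint_left, hS.adjoint_eq, hSS]
  have hSnorm : ‖S‖ ^ 2 = ‖R‖ := by
    rw [CFC.norm_sqrt R, Real.sq_sqrt (norm_nonneg R)]
  calc ‖R x‖ ^ 2 = ‖S (S x)‖ ^ 2 := by rw [← comp_apply, hSS]
    _ ≤ (‖S‖ * ‖S x‖) ^ 2 := by gcongr; exact S.le_opNorm _
    _ = ‖R‖ * re ⟪R x, x⟫_ℂ := by rw [mul_pow, hSnorm, hSx]

lemma IsPositive.norm_sub_apply_sq_le {R : H →L[ℂ] H} (hR : R.IsPositive) (x : H) :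
    ‖x - R x‖ ^ 2 ≤ ‖x‖ ^ 2 - (2 - ‖R‖) * re ⟪R x, x⟫_ℂ := by
  rw [@norm_sub_sq ℂ, inner_re_symm]
  linarith [hR.norm_apply_sq_le x]

lemma IsPositive.exists_pos_mul_norm_sq_le_re_inner {R : H →L[ℂ] H} (hR : R.IsPositive)
    {K : Set H} {C : ℝ} (hC : ∀ y ∈ K, ‖y‖ ≤ C * ‖R y‖) :
    ∃ δ > 0, ∀ y ∈ K, δ * ‖y‖ ^ 2 ≤ re ⟪R y, y⟫_ℂ := by
  refine ⟨(C ^ 2 * ‖R‖ + 1)⁻¹, by positivity, fun y hy => ?_⟩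
  rw [inv_mul_le_iff₀ (by positivity)]
  have hRy := hR.re_inner_nonneg_left y
  calc ‖y‖ ^ 2 ≤ (C * ‖R y‖) ^ 2 := by gcongr; exact hC y hy
    _ = C ^ 2 * ‖R y‖ ^ 2 := mul_pow _ _ _
    _ ≤ C ^ 2 * (‖R‖ * re ⟪R y, y⟫_ℂ) := by gcongr; exact hR.norm_apply_sq_le y
    _ ≤ (C ^ 2 * ‖R‖ + 1) * re ⟪R y, y⟫_ℂ := by nlinarith

lemma IsStarProjection.norm_sub_lt_one {P R : H →L[ℂ] H} (hP : IsStarProjection P)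
    (hR : R.IsPositive) (hRP : R ∘L P = R) (hR2 : ‖R‖ < 2) {δ : ℝ} (hδ : 0 < δ)
    (hlow : ∀ y ∈ P.kerᗮ, δ * ‖y‖ ^ 2 ≤ re ⟪R y, y⟫_ℂ) : ‖P - R‖ < 1 := by
  set c := max (1 - (2 - ‖R‖) * δ) 0
  have hc : c < 1 := max_lt (by nlinarith) one_pos
  refine (opNorm_le_sqrt_of_norm_apply_sq_le (c := c) fun x => ?_).trans_lt
    ((Real.sqrt_lt' one_pos).mpr (by rwa [one_pow]))
  set y := P x
  have hy : y ∈ P.kerᗮ := hP.ker_eq_orthogonal_range ▸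
    Submodule.le_orthogonal_orthogonal _ (LinearMap.mem_range_self _ x)
  have hyx : ‖y‖ ≤ ‖x‖ := by simpa using P.le_of_opNorm_le hP.norm_le x
  have hPR : (P - R) x = y - R y := by rw [sub_apply, ← comp_apply R P, hRP]
  calc ‖(P - R) x‖ ^ 2 ≤ ‖y‖ ^ 2 - (2 - ‖R‖) * re ⟪R y, y⟫_ℂ :=
        hPR ▸ hR.norm_sub_apply_sq_le y
    _ ≤ ‖y‖ ^ 2 - (2 - ‖R‖) * (δ * ‖y‖ ^ 2) := by gcongr; exact hlow y hy
    _ ≤ c * ‖y‖ ^ 2 := by nlinarith [le_max_left (1 - (2 - ‖R‖) * δ) 0]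
    _ ≤ c * ‖x‖ ^ 2 := by gcongr

end Positive

end ContinuousLinearMap

/-- Convergence of the polar proper splitting of `T`: the conditions
`ρ(U_T* V) < 1`, `‖U_T - T‖ < 1`, `‖P_{T*} - |T|‖ < 1` and `‖T‖ < 2` are
all equivalent. -/
theorem polar_splitting_convergence_tfae
    {H : Type*} [NormedAddCommGroup H] [InnerProductSpace ℂ H] [CompleteSpace H]
    (T UT R P : H →L[ℂ] H)
    (hTcr : IsClosed (LinearMap.range (T : H →ₗ[ℂ] H) : Set H))
    (hR : R.IsPositive) (hR2 : R ∘L R = adjoint T ∘L T)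
    (hpolar : T = UT ∘L R)
    (hpi : UT ∘L adjoint UT ∘L UT = UT)
    (hkerU : LinearMap.ker (UT : H →ₗ[ℂ] H) = LinearMap.ker (T : H →ₗ[ℂ] H))
    (hP : IsSelfAdjoint P) (hP2 : P ∘L P = P)
    (hPran : LinearMap.range (P : H →ₗ[ℂ] H) = LinearMap.range ((adjoint T : H →L[ℂ] H) : H →ₗ[ℂ] H)) :
    [spectralRadius ℂ (adjoint UT ∘L (UT - T)) < 1,
      ‖UT - T‖ < 1,
      ‖P - R‖ < 1,
      ‖T‖ < 2].TFAE := by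
  have hPproj : IsStarProjection P := ⟨hP2, hP⟩
  have hRT : adjoint R ∘L R = adjoint T ∘L T := by rw [hR.isSelfAdjoint.adjoint_eq, hR2]
  have hkerP : P.ker = T.ker := by
    rw [hPproj.ker_eq_orthogonal_range, hPran, orthogonal_range, adjoint_adjoint]
  have hUTP : adjoint UT ∘L UT = P :=
    (isStarProjection_adjoint_comp_self hpi).eq_of_ker_eq hPproj
      (by rw [ker_adjoint_comp_self, hkerU, hkerP])
  have hRP : R ∘L P = R := comp_eq_self_of_ker_le hPproj.isIdempotentElem fun x hx => by
    rw [hkerP] at hx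
    simpa [LinearMap.mem_ker, ← norm_eq_zero, norm_apply_eq_of_adjoint_comp_self_eq hRT x] using hx
  have hPR : P ∘L R = R := by
    simpa only [adjoint_comp, hP.adjoint_eq, hR.isSelfAdjoint.adjoint_eq] using congr(adjoint $hRP)
  have hnormT : ‖T‖ = ‖R‖ := opNorm_ext _ _ (norm_apply_eq_of_adjoint_comp_self_eq hRT.symm)
  tfae_have 1 ↔ 3 := by
    rw [show adjoint UT ∘L (UT - T) = P - R by rw [comp_sub, hUTP, hpolar, ← comp_assoc, hUTP, hPR],
      (hP.sub hR.isSelfAdjoint).spectralRadius_eq_nnnorm]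
    exact_mod_cast Iff.rfl
  tfae_have 2 ↔ 3 := by
    have hUTP' : adjoint UT ∘L UT = adjoint P ∘L P := by rw [hUTP, hP.adjoint_eq, hP2]
    rw [show UT - T = UT ∘L (1 - R) by rw [hpolar, comp_sub]; rfl,
      show P - R = P ∘L (1 - R) by rw [comp_sub, hPR]; rfl,
      opNorm_ext (UT ∘L (1 - R)) (P ∘L (1 - R)) fun x =>
        norm_apply_eq_of_adjoint_comp_self_eq hUTP' _]
  tfae_have 3 → 4 := fun h3 => calc
    ‖T‖ = ‖P - (P - R)‖ := by rw [hnormT, sub_sub_cancel]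
    _ ≤ ‖P‖ + ‖P - R‖ := norm_sub_le _ _
    _ < 1 + 1 := add_lt_add_of_le_of_lt hPproj.norm_le h3
    _ = 2 := one_add_one_eq_two
  tfae_have 4 → 3 := fun h4 => by
    obtain ⟨C, hC⟩ := exists_norm_le_mul_norm_apply_of_isClosed_range T hTcr
    obtain ⟨δ, hδ, hlow⟩ := hR.exists_pos_mul_norm_sq_le_re_inner fun y hy => by
      rw [norm_apply_eq_of_adjoint_comp_self_eq hRT]; exact hC y hy
    exact hPproj.norm_sub_lt_one hR hRP (hnormT ▸ h4) hδ (hkerP ▸ hlow)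
  tfae_finish
end

section
/- Let S, T be bounded operators with closed range on a complex Hilbert space such that S is below T in the star order (S = P_S T and S* = P_{S*} T*). If the polar proper splitting of T converges (i.e., ρ(U_T*(U_T − T)) < 1), then the polar proper splitting of S converges, and moreover ρ(U_S*(U_S − S)) ≤ ρ(U_T*(U_T − T)). In addition S = P_S U_T − P_S (U_T − T). -/
open ContinuousLinearMap

section Aux

variable {H : Type*} [NormedAddCommGroup H] [InnerProductSpace ℂ H] [CompleteSpace H]

local notation "⟪" x ", " y "⟫" => @inner ℂ _ _ x y

lemma sa_inner {A : H →L[ℂ] H} (hA : IsSelfAdjoint A) (u v : H) :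
    ⟪A u, v⟫ = ⟪u, A v⟫ := by
  conv_lhs => rw [← isSelfAdjoint_iff'.1 hA]
  exact adjoint_inner_left A v u

open scoped ContinuousFunctionalCalculus in
lemma commute_cfc_real (b a : H →L[ℂ] H) (ha : IsSelfAdjoint a) (h : Commute b a)
    (f : ℝ → ℝ) : Commute b (cfc f a) := by
  refine cfc_cases (fun x => Commute b x) a f (Commute.zero_right b) fun hf ha' => ?_
  have key : ∀ g : C(spectrum ℝ a, ℝ), Commute b (cfcHom ha' g) := by
    intro g
    induction g using ContinuousMap.induction_on_of_compact with
    | const r =>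
        have : (ContinuousMap.const (spectrum ℝ a) r) = algebraMap ℝ C(spectrum ℝ a, ℝ) r := rfl
        rw [this, AlgHomClass.commutes]
        exact (Algebra.commutes r b).symm
    | id => rw [cfcHom_id ha']; exact h
    | star_id => rw [map_star, cfcHom_id ha', ha'.star_eq]; exact h
    | add f' g' hf' hg' => rw [map_add]; exact hf'.add_right hg'
    | mul f' g' hf' hg' => rw [map_mul]; exact hf'.mul_right hg'
    | frequently f' hf' =>
        have hcl : IsClosed {g : C(spectrum ℝ a, ℝ) | Commute b (cfcHom ha' g)} := by
          have : Continuous (cfcHom ha' (R := ℝ)) := (cfcHom_isClosedEmbedding ha').continuous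
          exact IsClosed.preimage this (isClosed_eq (continuous_mul_left b) (continuous_mul_right b))
        exact hcl.closure_subset (mem_closure_iff_frequently.2 hf')
  exact key _

lemma commute_sqrt (b a : H →L[ℂ] H) (ha : 0 ≤ a) (h : Commute b a) :
    Commute b (CFC.sqrt a) := by
  rw [CFC.sqrt_eq_cfc, cfc_nnreal_eq_real _ a ha]
  exact commute_cfc_real b a (IsSelfAdjoint.of_nonneg ha) h _

/-- a self-adjoint idempotent acts as the identity on anything orthogonal to its kernel;
in composed form. -/
lemma proj_fix {P R : H →L[ℂ] H} (hP : IsSelfAdjoint P) (hP2 : P ∘L P = P)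
    (hR : IsSelfAdjoint R) (hker : LinearMap.ker (P : H →ₗ[ℂ] H) ≤ LinearMap.ker (R : H →ₗ[ℂ] H)) :
    P ∘L R = R := by
  ext x
  have happ : ∀ y, P (P y) = P y := fun y => by
    simpa using DFunLike.congr_fun hP2 y
  show P (R x) = R x
  set z := R x with hz
  set w := z - P z with hw
  have hPw : P w = 0 := by rw [hw, map_sub, happ, sub_self]
  have hRw : R w = 0 := hker (LinearMap.mem_ker.mpr hPw)
  have h1 : ⟪z, w⟫ = 0 := by
    rw [hz, sa_inner hR, hRw, inner_zero_right]
  have h2 : ⟪P z, w⟫ = 0 := by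
    rw [sa_inner hP, hPw, inner_zero_right]
  have h3 : ⟪w, w⟫ = 0 := by
    rw [hw, inner_sub_left]
    rw [← hw, h1, h2, sub_zero]
  have : w = 0 := inner_self_eq_zero.mp h3
  rw [hw] at this
  exact (sub_eq_zero.mp this).symm

lemma ker_sq {R B : H →L[ℂ] H} (hR : IsSelfAdjoint R) (hR2 : R ∘L R = adjoint B ∘L B) :
    LinearMap.ker (R : H →ₗ[ℂ] H) = LinearMap.ker (B : H →ₗ[ℂ] H) := by
  ext x
  have key : ⟪R x, R x⟫ = ⟪B x, B x⟫ := by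
    rw [sa_inner hR]
    have : R (R x) = adjoint B (B x) := by
      simpa using DFunLike.congr_fun hR2 x
    rw [this, adjoint_inner_right]
  simp only [LinearMap.mem_ker, ContinuousLinearMap.coe_coe]
  constructor
  · intro h
    rw [← inner_self_eq_zero (𝕜 := ℂ), ← key, h, inner_zero_left]
  · intro h
    rw [← inner_self_eq_zero (𝕜 := ℂ), key, h, inner_zero_left]

lemma ker_proj_eq {P A : H →L[ℂ] H} (hP : IsSelfAdjoint P) (hP2 : P ∘L P = P)
    (hran : LinearMap.range (P : H →ₗ[ℂ] H) = LinearMap.range (adjoint A : H →ₗ[ℂ] H)) :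
    LinearMap.ker (P : H →ₗ[ℂ] H) = LinearMap.ker (A : H →ₗ[ℂ] H) := by
  have happ : ∀ y, P (P y) = P y := fun y => by
    simpa using DFunLike.congr_fun hP2 y
  ext x
  simp only [LinearMap.mem_ker, ContinuousLinearMap.coe_coe]
  constructor
  · intro h
    have : adjoint A (A x) ∈ LinearMap.range (P : H →ₗ[ℂ] H) := by
      rw [hran]; exact LinearMap.mem_range_self _ _
    obtain ⟨y, hy⟩ := this
    rw [ContinuousLinearMap.coe_coe] at hy
    rw [← inner_self_eq_zero (𝕜 := ℂ), ← adjoint_inner_right, ← hy]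
    rw [← sa_inner hP, h, inner_zero_left]
  · intro h
    have : P (P x) ∈ LinearMap.range (adjoint A : H →ₗ[ℂ] H) := by
      rw [← hran]; exact LinearMap.mem_range_self _ _
    obtain ⟨y, hy⟩ := this
    rw [ContinuousLinearMap.coe_coe] at hy
    rw [← inner_self_eq_zero (𝕜 := ℂ), sa_inner hP, ← hy,
      adjoint_inner_right, h, inner_zero_left]

lemma proj_unique {P Q : H →L[ℂ] H} (hP : IsSelfAdjoint P) (hP2 : P ∘L P = P)
    (hQ : IsSelfAdjoint Q) (hQ2 : Q ∘L Q = Q)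
    (hker : LinearMap.ker (P : H →ₗ[ℂ] H) = LinearMap.ker (Q : H →ₗ[ℂ] H)) : P = Q := by
  have h1 : Q ∘L P = P := proj_fix hQ hQ2 hP (le_of_eq hker.symm)
  have h2 : P ∘L Q = Q := proj_fix hP hP2 hQ (le_of_eq hker)
  have h3 := congrArg ContinuousLinearMap.adjoint h1
  rw [adjoint_comp, isSelfAdjoint_iff'.1 hP, isSelfAdjoint_iff'.1 hQ] at h3
  rw [← h2, h3]

lemma norm_proj_le {P : H →L[ℂ] H} (hP : IsSelfAdjoint P) (hP2 : P ∘L P = P) :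
    ‖P‖ ≤ 1 := by
  refine opNorm_le_bound P zero_le_one fun x => ?_
  rw [one_mul]
  rcases eq_or_lt_of_le (norm_nonneg (P x)) with h | h
  · rw [← h]; exact norm_nonneg x
  have happ : P (P x) = P x := by simpa using DFunLike.congr_fun hP2 x
  have key : ‖P x‖ ^ 2 ≤ ‖x‖ * ‖P x‖ := by
    have e1 : RCLike.re ⟪P x, P x⟫ = ‖P x‖ ^ 2 := inner_self_eq_norm_sq _
    have e2 : ⟪P x, P x⟫ = ⟪x, P x⟫ := by rw [sa_inner hP, happ]
    calc ‖P x‖ ^ 2 = RCLike.re ⟪x, P x⟫ := by rw [← e1, e2]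
      _ ≤ ‖⟪x, P x⟫‖ := RCLike.re_le_norm _
      _ ≤ ‖x‖ * ‖P x‖ := norm_inner_le_norm _ _
  nlinarith [norm_nonneg x]

end Aux

set_option maxHeartbeats 2000000

/-- If `S ≤* T` (star order) and the polar proper splitting of `T` converges, then the
polar proper splitting of `S` converges, `ρ(U_S* W) ≤ ρ(U_T* V)`, and
`S = P_S U_T - P_S (U_T - T)`. -/
theorem polar_splitting_star_order
    {H : Type*} [NormedAddCommGroup H] [InnerProductSpace ℂ H] [CompleteSpace H]
    (S T US UT RS RT PS PSs : H →L[ℂ] H)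
    (hScr : IsClosed (LinearMap.range (S : H →ₗ[ℂ] H) : Set H))
    (hTcr : IsClosed (LinearMap.range (T : H →ₗ[ℂ] H) : Set H))
    -- orthogonal projections onto ran S and ran S*
    (hPS : IsSelfAdjoint PS) (hPS2 : PS ∘L PS = PS)
    (hPSran : LinearMap.range (PS : H →ₗ[ℂ] H) = LinearMap.range (S : H →ₗ[ℂ] H))
    (hPSs : IsSelfAdjoint PSs) (hPSs2 : PSs ∘L PSs = PSs)
    (hPSsran : LinearMap.range (PSs : H →ₗ[ℂ] H) = LinearMap.range (adjoint S : H →ₗ[ℂ] H))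
    -- star order
    (hstar1 : S = PS ∘L T) (hstar2 : adjoint S = PSs ∘L adjoint T)
    -- polar decompositions
    (hRT : RT.IsPositive) (hRT2 : RT ∘L RT = adjoint T ∘L T)
    (hpolarT : T = UT ∘L RT) (hpiT : UT ∘L adjoint UT ∘L UT = UT)
    (hkerUT : LinearMap.ker (UT : H →ₗ[ℂ] H) = LinearMap.ker (T : H →ₗ[ℂ] H))
    (hRS : RS.IsPositive) (hRS2 : RS ∘L RS = adjoint S ∘L S)
    (hpolarS : S = US ∘L RS) (hpiS : US ∘L adjoint US ∘L US = US)
    (hkerUS : LinearMap.ker (US : H →ₗ[ℂ] H) = LinearMap.ker (S : H →ₗ[ℂ] H))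
    -- convergence of the polar proper splitting of T
    (hconv : spectralRadius ℂ (adjoint UT ∘L (UT - T)) < 1) :
    spectralRadius ℂ (adjoint US ∘L (US - S)) < 1 ∧
      spectralRadius ℂ (adjoint US ∘L (US - S)) ≤
        spectralRadius ℂ (adjoint UT ∘L (UT - T)) ∧
      S = PS ∘L UT - PS ∘L (UT - T) := by
  -- notation: everything as multiplication
  have hmul : ∀ A B : H →L[ℂ] H, A ∘L B = A * B := fun _ _ => rfl
  set Qt := adjoint UT * UT with hQtdef
  set Qs := adjoint US * US with hQsdef
  -- basic self-adjointness
  have hRTsa : IsSelfAdjoint RT := hRT.isSelfAdjoint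
  have hRSsa : IsSelfAdjoint RS := hRS.isSelfAdjoint
  have hQt_sa : IsSelfAdjoint Qt := by
    have := IsSelfAdjoint.star_mul_self UT
    rwa [star_eq_adjoint] at this
  have hQs_sa : IsSelfAdjoint Qs := by
    have := IsSelfAdjoint.star_mul_self US
    rwa [star_eq_adjoint] at this
  -- idempotency of Qt, Qs
  have hpiT' : UT * (adjoint UT * UT) = UT := hpiT
  have hpiS' : US * (adjoint US * US) = US := hpiS
  have hQt2 : Qt * Qt = Qt := by
    rw [hQtdef, mul_assoc, hpiT']
  have hQs2 : Qs * Qs = Qs := by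
    rw [hQsdef, mul_assoc, hpiS']
  -- kernels
  have hkerQt : LinearMap.ker (Qt : H →ₗ[ℂ] H) = LinearMap.ker (UT : H →ₗ[ℂ] H) := ker_sq hQt_sa hQt2
  have hkerQs : LinearMap.ker (Qs : H →ₗ[ℂ] H) = LinearMap.ker (US : H →ₗ[ℂ] H) := ker_sq hQs_sa hQs2
  have hkerRT : LinearMap.ker (RT : H →ₗ[ℂ] H) = LinearMap.ker (T : H →ₗ[ℂ] H) := ker_sq hRTsa hRT2
  have hkerRS : LinearMap.ker (RS : H →ₗ[ℂ] H) = LinearMap.ker (S : H →ₗ[ℂ] H) := ker_sq hRSsa hRS2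
  have hkerPSs : LinearMap.ker (PSs : H →ₗ[ℂ] H) = LinearMap.ker (S : H →ₗ[ℂ] H) := ker_proj_eq hPSs hPSs2 hPSsran
  have hkerTS : LinearMap.ker (T : H →ₗ[ℂ] H) ≤ LinearMap.ker (S : H →ₗ[ℂ] H) := by
    intro x hx
    have hx' : T x = 0 := hx
    have : S x = PS (T x) := by rw [hstar1]; rfl
    show S x = 0
    rw [this, hx', map_zero]
  -- Qs = PSs
  have hQsPSs : Qs = PSs := by
    refine proj_unique hQs_sa hQs2 hPSs hPSs2 ?_
    rw [hkerQs, hkerUS, hkerPSs]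
  -- the splittings
  have hATeq : adjoint UT ∘L (UT - T) = Qt - RT := by
    have h1 : Qt * RT = RT :=
      proj_fix hQt_sa hQt2 hRTsa (by rw [hkerQt, hkerUT, hkerRT])
    have h2 : adjoint UT * T = RT := by
      have := congrArg (adjoint UT * ·) hpolarT
      simp only [hmul] at this
      rw [this, ← mul_assoc]
      exact h1
    rw [hmul, mul_sub, h2, hQtdef]
  have hASeq : adjoint US ∘L (US - S) = Qs - RS := by
    have h1 : Qs * RS = RS :=
      proj_fix hQs_sa hQs2 hRSsa (by rw [hkerQs, hkerUS, hkerRS])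
    have h2 : adjoint US * S = RS := by
      have := congrArg (adjoint US * ·) hpolarS
      simp only [hmul] at this
      rw [this, ← mul_assoc]
      exact h1
    rw [hmul, mul_sub, h2, hQsdef]
  -- S*S = PSs (T*T)
  have hPSS : PS ∘L S = S := by
    ext x
    have : S x ∈ LinearMap.range (PS : H →ₗ[ℂ] H) := by rw [hPSran]; exact LinearMap.mem_range_self _ _
    obtain ⟨y, hy⟩ := this
    show PS (S x) = S x
    rw [← hy]
    simpa using DFunLike.congr_fun hPS2 y
  have hSsS : adjoint S * S = PSs * (adjoint T * T) := by
    have h1 : adjoint S * PS = adjoint S := by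
      have := congrArg ContinuousLinearMap.adjoint hPSS
      rwa [adjoint_comp, isSelfAdjoint_iff'.1 hPS, hmul] at this
    calc adjoint S * S = adjoint S * (PS * T) := by
          have := congrArg (adjoint S * ·) hstar1
          simpa only [hmul] using this
      _ = (adjoint S * PS) * T := (mul_assoc _ _ _).symm
      _ = adjoint S * T := by rw [h1]
      _ = (PSs * adjoint T) * T := by rw [hstar2, hmul]
      _ = PSs * (adjoint T * T) := mul_assoc _ _ _
  -- PSs commutes with T*T and hence with RT
  have hTT_sa : IsSelfAdjoint (adjoint T * T) := by
    have := IsSelfAdjoint.star_mul_self T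
    rwa [star_eq_adjoint] at this
  have hSS_sa : IsSelfAdjoint (adjoint S * S) := by
    have := IsSelfAdjoint.star_mul_self S
    rwa [star_eq_adjoint] at this
  have hcomm : Commute PSs (adjoint T * T) := by
    show PSs * (adjoint T * T) = (adjoint T * T) * PSs
    have := hSS_sa
    rw [hSsS] at this
    conv_lhs => rw [← this.star_eq]
    rw [star_mul, hTT_sa.star_eq, hPSs.star_eq]
  have hRT0 : (0 : H →L[ℂ] H) ≤ RT := (nonneg_iff_isPositive RT).2 hRT
  have hRS0 : (0 : H →L[ℂ] H) ≤ RS := (nonneg_iff_isPositive RS).2 hRS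
  have hTT0 : (0 : H →L[ℂ] H) ≤ adjoint T * T := by
    have := star_mul_self_nonneg T
    rwa [star_eq_adjoint] at this
  have hRTsq : RT ^ 2 = adjoint T * T := by rw [sq]; exact hRT2
  have hRSsq : RS ^ 2 = adjoint S * S := by rw [sq]; exact hRS2
  have hcommRT : Commute PSs RT := by
    have h := commute_sqrt PSs (adjoint T * T) hTT0 hcomm
    rwa [← hRTsq, CFC.sqrt_sq RT hRT0] at h
  -- RS = PSs * RT
  have hPSs2' : PSs * PSs = PSs := hPSs2
  have hconjfix : PSs * RT * PSs = PSs * RT := by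
    rw [mul_assoc, ← hcommRT.eq, ← mul_assoc, hPSs2']
  have hA0 : (0 : H →L[ℂ] H) ≤ PSs * RT := by
    have h := (hRT.adjoint_conj PSs)
    rw [isSelfAdjoint_iff'.1 hPSs] at h
    have h' := (nonneg_iff_isPositive _).2 h
    have e : PSs ∘L RT ∘L PSs = PSs * RT := by
      rw [hmul, hmul, ← mul_assoc, hconjfix]
    rwa [e] at h'
  have hAsq : (PSs * RT) ^ 2 = RS ^ 2 := by
    calc (PSs * RT) ^ 2 = ((PSs * RT) * PSs) * RT := by rw [sq, ← mul_assoc]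
      _ = (PSs * RT) * RT := by rw [hconjfix]
      _ = PSs * (RT * RT) := mul_assoc _ _ _
      _ = PSs * (adjoint T * T) := by rw [show RT * RT = adjoint T * T from hRT2]
      _ = adjoint S * S := hSsS.symm
      _ = RS ^ 2 := hRSsq.symm
  have hRSeq : RS = PSs * RT := by
    have h1 : CFC.sqrt ((PSs * RT) ^ 2) = PSs * RT := CFC.sqrt_sq _ hA0
    have h2 : CFC.sqrt (RS ^ 2) = RS := CFC.sqrt_sq _ hRS0
    rw [hAsq] at h1
    exact h2.symm.trans h1
  -- conjugation identity
  have hQtPSs : Qt ∘L PSs = PSs := by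
    refine proj_fix hQt_sa hQt2 hPSs ?_
    rw [hkerQt, hkerUT, hkerPSs]
    exact hkerTS
  have hPSsQt : PSs * Qt = PSs := by
    have := congrArg ContinuousLinearMap.adjoint hQtPSs
    rwa [adjoint_comp, isSelfAdjoint_iff'.1 hPSs, isSelfAdjoint_iff'.1 hQt_sa, hmul] at this
  have hconj : Qs - RS = PSs * (Qt - RT) * PSs := by
    rw [mul_sub, sub_mul, hPSsQt, hPSs2', hconjfix, hQsPSs, hRSeq]
  -- self-adjointness of the two operators
  have hAT_sa : IsSelfAdjoint (Qt - RT) := hQt_sa.sub hRTsa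
  have hAS_sa : IsSelfAdjoint (Qs - RS) := hQs_sa.sub hRSsa
  -- norms
  have hPSsnorm : ‖PSs‖ ≤ 1 := norm_proj_le hPSs hPSs2
  have hnorm : ‖Qs - RS‖ ≤ ‖Qt - RT‖ := by
    rw [hconj]
    calc ‖PSs * (Qt - RT) * PSs‖ ≤ ‖PSs * (Qt - RT)‖ * ‖PSs‖ := norm_mul_le _ _
      _ ≤ (‖PSs‖ * ‖Qt - RT‖) * ‖PSs‖ := by
          gcongr
          exact norm_mul_le _ _
      _ ≤ 1 * ‖Qt - RT‖ * 1 := by gcongr <;> exact hPSsnorm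
      _ = ‖Qt - RT‖ := by ring
  have hρT : spectralRadius ℂ (Qt - RT) = (‖Qt - RT‖₊ : ENNReal) :=
    hAT_sa.spectralRadius_eq_nnnorm
  have hρS : spectralRadius ℂ (Qs - RS) = (‖Qs - RS‖₊ : ENNReal) :=
    hAS_sa.spectralRadius_eq_nnnorm
  have hle : spectralRadius ℂ (Qs - RS) ≤ spectralRadius ℂ (Qt - RT) := by
    rw [hρT, hρS, ENNReal.coe_le_coe]
    exact_mod_cast hnorm
  rw [hATeq] at hconv
  refine ⟨?_, ?_, ?_⟩
  · rw [hASeq]; exact lt_of_le_of_lt hle hconv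
  · rw [hASeq, hATeq]; exact hle
  · rw [hstar1, hmul, hmul, hmul, mul_sub]
    abel
end

section
/- Let T be a split operator on a complex Hilbert space (ran(T) closed and ran(T) ∔ ker(T) = H) and let Q_T be the oblique projection onto ran(T) along ker(T). If ‖P_{T*}(I − T)‖ < 1 then the Q_T-proper splitting T = Q_T − (Q_T − T) converges, i.e., ρ(Q_T†(Q_T − T)) < 1. Conversely, if P_{T*} T is self-adjoint and ρ(Q_T†(Q_T − T)) < 1, then ‖P_{T*}(I − T)‖ < 1. -/
/-!
Both `Q_T† Q_T` and `P_{T*}` are orthogonal projections with kernel `ker T`, hence they are equal;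
together with `Q_T T = T` this turns the iteration operator `Q_T† (Q_T - T)` into `P_{T*} (I - T)`.
The spectral radius is bounded by the norm, with equality for self-adjoint operators, and
`P_{T*} (I - T) = P_{T*} - P_{T*} T` is self-adjoint when `P_{T*} T` is.
-/

open ContinuousLinearMap

namespace ContinuousLinearMap

-- Unlike `spectrum.spectralRadius_le_nnnorm`, this needs no `NormOneClass`, i.e. no `Nontrivial E`.
theorem spectralRadius_le_nnnorm {𝕜 E : Type*} [NontriviallyNormedField 𝕜] [NormedAddCommGroup E]
    [NormedSpace 𝕜 E] [CompleteSpace E] (a : E →L[𝕜] E) : spectralRadius 𝕜 a ≤ ‖a‖₊ :=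
  iSup₂_le fun _ hk => by
    exact_mod_cast (spectrum.norm_le_norm_mul_of_mem hk).trans
      (mul_le_of_le_one_right (norm_nonneg a) norm_id_le)

variable {𝕜 E F : Type*} [RCLike 𝕜] [NormedAddCommGroup E] [InnerProductSpace 𝕜 E] [CompleteSpace E]
  [NormedAddCommGroup F] [InnerProductSpace 𝕜 F] [CompleteSpace F]

theorem IsStarProjection.ext_of_ker_eq_s11 {S T : E →L[𝕜] E} (hS : IsStarProjection S)
    (hT : IsStarProjection T) (h : S.ker = T.ker) : S = T := by
  have hrange : ((1 - S : E →L[𝕜] E) : E →ₗ[𝕜] E).range =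
      ((1 - T : E →L[𝕜] E) : E →ₗ[𝕜] E).range := by
    simpa [LinearMap.IsIdempotentElem.ker_eq_range_one_sub hS.isIdempotentElem.toLinearMap,
      LinearMap.IsIdempotentElem.ker_eq_range_one_sub hT.isIdempotentElem.toLinearMap] using h
  simpa using hS.one_sub.ext hT.one_sub hrange

theorem IsStarProjection.ker_eq_of_range_eq_range_adjoint {P : E →L[𝕜] E} {T : E →L[𝕜] F}
    (hP : IsStarProjection P) (h : P.range = (adjoint T).range) : P.ker = T.ker := by
  rw [← adjoint_adjoint T, ← orthogonal_range, ← h, orthogonal_range, hP.isSelfAdjoint.adjoint_eq]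

end ContinuousLinearMap

namespace IsMoorePenroseInverse

variable {H : Type*} [NormedAddCommGroup H] [InnerProductSpace ℂ H] [CompleteSpace H]
  {Q Qd : H →L[ℂ] H}

theorem isStarProjection_comp (h : IsMoorePenroseInverse Q Qd) : IsStarProjection (Qd ∘L Q) where
  isIdempotentElem := by rw [IsIdempotentElem, mul_def, comp_assoc, h.1]
  isSelfAdjoint := h.2.2.2

theorem ker_comp (h : IsMoorePenroseInverse Q Qd) : (Qd ∘L Q).ker = Q.ker := by
  refine le_antisymm (fun x hx => ?_) (LinearMap.ker_le_ker_comp _ _)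
  rw [LinearMap.mem_ker] at hx ⊢
  rw [← h.1]
  simpa using congrArg Q hx

end IsMoorePenroseInverse

theorem Q_proper_splitting_convergence_general
    {H : Type*} [NormedAddCommGroup H] [InnerProductSpace ℂ H] [CompleteSpace H]
    (T Q Qd P : H →L[ℂ] H)
    -- Q is the oblique projection onto ran T along ker T
    (hQ2 : Q ∘L Q = Q)
    (hQran : LinearMap.range (Q : H →ₗ[ℂ] H) = LinearMap.range (T : H →ₗ[ℂ] H))
    (hQker : LinearMap.ker (Q : H →ₗ[ℂ] H) = LinearMap.ker (T : H →ₗ[ℂ] H))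
    (hQd : IsMoorePenroseInverse Q Qd)
    -- P is the orthogonal projection onto ran T*
    (hP : IsSelfAdjoint P) (hP2 : P ∘L P = P)
    (hPran : LinearMap.range (P : H →ₗ[ℂ] H) = LinearMap.range ((adjoint T : H →L[ℂ] H) : H →ₗ[ℂ] H)) :
    (‖P ∘L (1 - T)‖ < 1 → spectralRadius ℂ (Qd ∘L (Q - T)) < 1) ∧
      (IsSelfAdjoint (P ∘L T) → spectralRadius ℂ (Qd ∘L (Q - T)) < 1 →
        ‖P ∘L (1 - T)‖ < 1) := by
  have hPproj : IsStarProjection P := ⟨hP2, hP⟩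
  have hQdQ : Qd ∘L Q = P := hQd.isStarProjection_comp.ext_of_ker_eq_s11 hPproj <| by
    rw [hQd.ker_comp, hQker, hPproj.ker_eq_of_range_eq_range_adjoint hPran]
  have hQT : Q ∘L T = T := coe_injective <|
    (LinearMap.IsIdempotentElem.comp_eq_right_iff (IsIdempotentElem.toLinearMap (f := Q) hQ2) _).mpr
      hQran.ge
  have hsplit : Qd ∘L (Q - T) = P ∘L (1 - T) := by
    calc Qd ∘L (Q - T) = Qd ∘L Q - (Qd ∘L Q) ∘L T := by rw [comp_sub, comp_assoc, hQT]
      _ = P ∘L (1 - T) := by rw [hQdQ, comp_sub, one_def, comp_id]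
  rw [hsplit, ← ENNReal.coe_one]
  refine ⟨fun hnorm => (spectralRadius_le_nnnorm _).trans_lt (by exact_mod_cast hnorm),
    fun hPT hrad => ?_⟩
  have hsa : IsSelfAdjoint (P ∘L (1 - T)) := by rw [comp_sub, one_def, comp_id]; exact hP.sub hPT
  rw [hsa.spectralRadius_eq_nnnorm] at hrad
  exact_mod_cast hrad

/-- Convergence of the `Q_T`-proper splitting of a split operator. -/
theorem Q_proper_splitting_convergence
    {H : Type*} [NormedAddCommGroup H] [InnerProductSpace ℂ H] [CompleteSpace H]
    (T Q Qd P : H →L[ℂ] H)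
    (hTcr : IsClosed (LinearMap.range (T : H →ₗ[ℂ] H) : Set H))
    (hsplitop : IsCompl (LinearMap.range (T : H →ₗ[ℂ] H)) (LinearMap.ker (T : H →ₗ[ℂ] H)))
    -- Q is the oblique projection onto ran T along ker T
    (hQ2 : Q ∘L Q = Q)
    (hQran : LinearMap.range (Q : H →ₗ[ℂ] H) = LinearMap.range (T : H →ₗ[ℂ] H))
    (hQker : LinearMap.ker (Q : H →ₗ[ℂ] H) = LinearMap.ker (T : H →ₗ[ℂ] H))
    (hQd : IsMoorePenroseInverse Q Qd)
    -- P is the orthogonal projection onto ran T*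
    (hP : IsSelfAdjoint P) (hP2 : P ∘L P = P)
    (hPran : LinearMap.range (P : H →ₗ[ℂ] H) = LinearMap.range ((adjoint T : H →L[ℂ] H) : H →ₗ[ℂ] H)) :
    (‖P ∘L (1 - T)‖ < 1 → spectralRadius ℂ (Qd ∘L (Q - T)) < 1) ∧
      (IsSelfAdjoint (P ∘L T) → spectralRadius ℂ (Qd ∘L (Q - T)) < 1 →
        ‖P ∘L (1 - T)‖ < 1) :=
  Q_proper_splitting_convergence_general T Q Qd P hQ2 hQran hQker hQd hP hP2 hPran
end

section
/- Let T be a split operator on a complex Hilbert space with group inverse T♯. If ‖P_{T*}(I − T²)‖ < 1, then ρ((T♯)†(T♯ − T)) < 1, i.e., the group proper splitting T = T♯ − (T♯ − T) converges. -/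
open ContinuousLinearMap

/-- Convergence of the group proper splitting `T = T♯ - (T♯ - T)` of a split operator. -/
theorem group_proper_splitting_convergence
    {H : Type*} [NormedAddCommGroup H] [InnerProductSpace ℂ H] [CompleteSpace H]
    (T Ts Tsd P : H →L[ℂ] H)
    (hTcr : IsClosed (LinearMap.range (T : H →ₗ[ℂ] H) : Set H))
    (hsplitop : IsCompl (LinearMap.range (T : H →ₗ[ℂ] H)) (LinearMap.ker (T : H →ₗ[ℂ] H)))
    -- Ts is the group inverse of T
    (hg1 : T ∘L Ts ∘L T = T) (hg2 : Ts ∘L T ∘L Ts = Ts) (hg3 : T ∘L Ts = Ts ∘L T)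
    (hTsd : IsMoorePenroseInverse Ts Tsd)
    -- P is the orthogonal projection onto ran T*
    (hP : IsSelfAdjoint P) (hP2 : P ∘L P = P)
    (hPran : LinearMap.range (P : H →ₗ[ℂ] H) = LinearMap.range ((adjoint T : H →L[ℂ] H) : H →ₗ[ℂ] H))
    (hnorm : ‖P ∘L (1 - T ∘L T)‖ < 1) :
    spectralRadius ℂ (Tsd ∘L (Ts - T)) < 1 := by
  obtain ⟨hm1, hm2, hm3, hm4⟩ := hTsd
  set Q : H →L[ℂ] H := Tsd ∘L Ts with hQdef
  have hQsa : adjoint Q = Q := by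
    rwa [IsSelfAdjoint, ContinuousLinearMap.star_eq_adjoint] at hm4
  have hPsa : adjoint P = P := by
    rwa [IsSelfAdjoint, ContinuousLinearMap.star_eq_adjoint] at hP
  -- P fixes the range of T*
  have hPfix : ∀ x, P (adjoint T x) = adjoint T x := by
    intro x
    have hx : adjoint T x ∈ LinearMap.range (P : H →ₗ[ℂ] H) := by
      rw [hPran]; exact ⟨x, rfl⟩
    obtain ⟨z, hz : P z = adjoint T x⟩ := hx
    calc P (adjoint T x) = P (P z) := by rw [hz]
      _ = (P ∘L P) z := rfl
      _ = P z := by rw [hP2]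
      _ = adjoint T x := hz
  -- Ts ∘L Q = Ts
  have hTsQ : Ts ∘L Q = Ts := hm1
  -- Q fixes the range of Ts*
  have hQTs : Q ∘L adjoint Ts = adjoint Ts := by
    have := congrArg (adjoint (E := H) (F := H)) hTsQ
    rwa [adjoint_comp, hQsa] at this
  -- T = T ∘ T ∘ Ts
  have hT1 : T ∘L T ∘L Ts = T := by rw [hg3]; exact hg1
  -- Ts = Ts ∘ Ts ∘ T
  have hTs1 : Ts ∘L Ts ∘L T = Ts := by rw [← hg3]; exact hg2
  -- adjoint T factors through adjoint Ts
  have hTadj : adjoint T = adjoint Ts ∘L adjoint T ∘L adjoint T := by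
    conv_lhs => rw [← hT1]
    rw [adjoint_comp, adjoint_comp, ← comp_assoc]
  -- adjoint Ts factors through adjoint T
  have hTsadj : adjoint Ts = adjoint T ∘L adjoint Ts ∘L adjoint Ts := by
    conv_lhs => rw [← hTs1]
    rw [adjoint_comp, adjoint_comp, ← comp_assoc]
  -- Q fixes the range of T*
  have hQfix : ∀ x, Q (adjoint T x) = adjoint T x := by
    intro x
    conv_lhs => rw [hTadj]
    conv_rhs => rw [hTadj]
    have := DFunLike.congr_fun hQTs ((adjoint T ∘L adjoint T) x)
    simpa using this
  -- P fixes the range of Ts*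
  have hPTsfix : ∀ x, P (adjoint Ts x) = adjoint Ts x := by
    intro x
    conv_lhs => rw [hTsadj]
    conv_rhs => rw [hTsadj]
    exact hPfix _
  -- Q ∘ P = P
  have hQP : Q ∘L P = P := by
    ext x
    obtain ⟨y, hy : adjoint T y = P x⟩ : P x ∈ LinearMap.range ((adjoint T : H →L[ℂ] H) : H →ₗ[ℂ] H) := by rw [← hPran]; exact ⟨x, rfl⟩
    show Q (P x) = P x
    rw [← hy]
    exact hQfix y
  -- Q = adjoint Ts ∘L adjoint Tsd
  have hQexpr : Q = adjoint Ts ∘L adjoint Tsd := by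
    rw [← hQsa, hQdef, adjoint_comp]
  -- P ∘ Q = Q
  have hPQ : P ∘L Q = Q := by
    ext x
    show P (Q x) = Q x
    rw [hQexpr]
    exact hPTsfix _
  -- hence P = Q
  have hPeqQ : P = Q := by
    have h1 := congrArg (adjoint (E := H) (F := H)) hQP
    rw [adjoint_comp, hQsa, hPsa] at h1
    rw [← h1, hPQ]
  -- the key identity
  have hTsTT : Ts ∘L (T ∘L T) = T := by
    rw [← comp_assoc, ← hg3, comp_assoc]; exact hg1
  have key : Tsd ∘L (Ts - T) = P ∘L (1 - T ∘L T) := by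
    have h2 : Tsd ∘L (Ts - T) = Tsd ∘L Ts - Tsd ∘L T := by
      ext x; simp [ContinuousLinearMap.comp_apply]
    have h3 : P ∘L (1 - T ∘L T) = P - P ∘L (T ∘L T) := by
      ext x; simp [ContinuousLinearMap.comp_apply]
    rw [h2, h3, hPeqQ, hQdef]
    congr 1
    rw [comp_assoc, hTsTT]
  rw [key]
  rcases subsingleton_or_nontrivial H with hH | hH
  · have hs : spectrum ℂ (P ∘L (1 - T ∘L T)) = ∅ := by
      ext k
      simp [spectrum.mem_iff, isUnit_of_subsingleton]
    rw [spectralRadius, hs]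
    simp
  · calc spectralRadius ℂ (P ∘L (1 - T ∘L T)) ≤ ‖P ∘L (1 - T ∘L T)‖₊ :=
        spectrum.spectralRadius_le_nnnorm (𝕜 := ℂ) _
      _ < 1 := by
        rw [← ENNReal.coe_one, ENNReal.coe_lt_coe, ← NNReal.coe_lt_coe]
        exact hnorm
end

section
/- Let T be a self-adjoint closed range operator on a complex Hilbert space. Then: (i) the MP-proper splitting T = T† − (T† − T) converges if and only if ‖P_T − T²‖ < 1; (ii) the projection proper splitting T = P_T − (P_T − T) converges if and only if ‖P_T − T‖ < 1. -/
/-!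
Both splittings have a self-adjoint iteration operator: `T T†` is the orthogonal projection onto
`ran T`, hence equals `P_T`, so `T (T† - T) = P_T - T²`; and `P_T T = T` gives
`P_T (P_T - T) = P_T - T`. For self-adjoint elements of a C⋆-algebra the spectral radius is the
norm.
-/

open ContinuousLinearMap

theorem IsSelfAdjoint.spectralRadius_lt_one_iff {A : Type*} [CStarAlgebra A] {a : A}
    (ha : IsSelfAdjoint a) : spectralRadius ℂ a < 1 ↔ ‖a‖ < 1 := by
  rw [ha.spectralRadius_eq_nnnorm]
  exact_mod_cast Iff.rfl

theorem ContinuousLinearMap.comp_eq_right_of_range_le {R M : Type*} [Semiring R]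
    [TopologicalSpace M] [AddCommMonoid M] [Module R M] {P S : M →L[R] M}
    (hP : IsIdempotentElem P) (h : S.range ≤ P.range) : P ∘L S = S :=
  coe_injective ((LinearMap.IsIdempotentElem.comp_eq_right_iff hP.toLinearMap _).mpr h)

namespace IsMoorePenroseInverse

variable {H : Type*} [NormedAddCommGroup H] [InnerProductSpace ℂ H] [CompleteSpace H]
  {T Td : H →L[ℂ] H}

theorem isStarProjection_comp_s14 (h : IsMoorePenroseInverse T Td) :
    IsStarProjection (T ∘L Td) :=
  ⟨show (T ∘L Td ∘L T) ∘L Td = T ∘L Td by rw [h.1], h.2.2.1⟩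

theorem range_comp (h : IsMoorePenroseInverse T Td) : (T ∘L Td).range = T.range := by
  refine le_antisymm (LinearMap.range_comp_le_range _ _) ?_
  calc T.range = ((T ∘L Td) ∘L T).range := by rw [comp_assoc, h.1]
    _ ≤ (T ∘L Td).range := LinearMap.range_comp_le_range _ _

theorem comp_eq_of_range_eq (h : IsMoorePenroseInverse T Td) {P : H →L[ℂ] H}
    (hP : IsStarProjection P) (hPT : P.range = T.range) : T ∘L Td = P :=
  h.isStarProjection_comp_s14.ext hP (h.range_comp.trans hPT.symm)

end IsMoorePenroseInverse

theorem MP_and_projection_splitting_convergence_general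
    {H : Type*} [NormedAddCommGroup H] [InnerProductSpace ℂ H] [CompleteSpace H]
    (T Td P : H →L[ℂ] H)
    (hT : IsSelfAdjoint T)
    (hTd : IsMoorePenroseInverse T Td)
    -- P is the orthogonal projection onto ran T
    (hP : IsSelfAdjoint P) (hP2 : P ∘L P = P)
    (hPran : LinearMap.range (P : H →ₗ[ℂ] H) = LinearMap.range (T : H →ₗ[ℂ] H)) :
    (spectralRadius ℂ (T ∘L (Td - T)) < 1 ↔ ‖P - T ∘L T‖ < 1) ∧
      (spectralRadius ℂ (P ∘L (P - T)) < 1 ↔ ‖P - T‖ < 1) := by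
  have hTTd : T ∘L Td = P := hTd.comp_eq_of_range_eq ⟨hP2, hP⟩ hPran
  have hPT : P ∘L T = T := comp_eq_right_of_range_le hP2 hPran.ge
  constructor
  · rw [comp_sub, hTTd]
    exact (hP.sub (hT.pow 2)).spectralRadius_lt_one_iff
  · rw [comp_sub, hP2, hPT]
    exact (hP.sub hT).spectralRadius_lt_one_iff

/-- For self-adjoint closed range `T`: the MP-proper splitting converges iff
`‖P_T - T²‖ < 1`, and the projection proper splitting converges iff `‖P_T - T‖ < 1`. -/
theorem MP_and_projection_splitting_convergence
    {H : Type*} [NormedAddCommGroup H] [InnerProductSpace ℂ H] [CompleteSpace H]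
    (T Td P : H →L[ℂ] H)
    (hT : IsSelfAdjoint T)
    (hTcr : IsClosed (LinearMap.range (T : H →ₗ[ℂ] H) : Set H))
    (hTd : IsMoorePenroseInverse T Td)
    -- P is the orthogonal projection onto ran T
    (hP : IsSelfAdjoint P) (hP2 : P ∘L P = P)
    (hPran : LinearMap.range (P : H →ₗ[ℂ] H) = LinearMap.range (T : H →ₗ[ℂ] H)) :
    (spectralRadius ℂ (T ∘L (Td - T)) < 1 ↔ ‖P - T ∘L T‖ < 1) ∧
      (spectralRadius ℂ (P ∘L (P - T)) < 1 ↔ ‖P - T‖ < 1) :=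
  MP_and_projection_splitting_convergence_general T Td P hT hTd hP hP2 hPran
end

section
/- Let T be a self-adjoint closed range operator on a complex Hilbert space, and suppose the proper splitting T = |T| − (|T| − T) converges, i.e., ρ(|T|†(|T| − T)) < 1. Then T is a positive operator (hence T = |T|). -/
open ContinuousLinearMap

/-!
Work in a C*-algebra with `r = |t|` and `b` a Moore–Penrose inverse of `r`, and put `p = r b`.
The Penrose equations make `r` and `b` commute; `r² = t²` makes `t` commute with `r = √(t²)`
and, through the C*-identity, gives `ker r ⊆ ker t`, i.e. `t p = t = p t`. Hence `b` commutes
with `t`, and `(r - t)² = 2 r (r - t)` yields `a² = 2 a` for the iteration element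
`a = b (r - t)`. Since `ρ(a) < 1 < 2`, the element `2 - a` is invertible, so `a = 0` and
`r - t = p (r - t) = r a = 0`.
-/

open CFC

theorem IsSelfAdjoint.mul_comm_of_penrose {A : Type*} [Semigroup A] [StarMul A] {a b : A}
    (ha : IsSelfAdjoint a) (haba : a * b * a = a) (hab : IsSelfAdjoint (a * b))
    (hba : IsSelfAdjoint (b * a)) : a * b = b * a := by
  have haab : a * (a * b) = a := by
    simpa only [star_mul, ha.star_eq, hab.star_eq] using congrArg star haba
  have hbaa : b * a * a = a := by
    simpa only [star_mul, ha.star_eq, hba.star_eq, mul_assoc] using congrArg star haba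
  calc a * b = b * a * a * b := by rw [hbaa]
    _ = b * (a * (a * b)) := by simp only [mul_assoc]
    _ = b * a := by rw [haab]

theorem commute_of_mul_self_eq_star_mul_self {A : Type*} [CStarAlgebra A] [PartialOrder A]
    [StarOrderedRing A] {r t : A} (hr : 0 ≤ r) (hrt : r * r = star t * t) (ht : IsStarNormal t) :
    Commute r t := by
  rw [← sqrt_mul_self r, hrt]
  exact commute_abs_self t ht

theorem mul_eq_zero_of_star_mul_self_eq {A : Type*} [NonUnitalNormedRing A] [StarRing A]
    [CStarRing A] {r t q : A} (h : star t * t = star r * r) (hrq : r * q = 0) : t * q = 0 := by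
  rw [← CStarRing.star_mul_self_eq_zero_iff]
  calc star (t * q) * (t * q) = star q * (star t * t) * q := by
        simp only [star_mul, mul_assoc]
    _ = star (r * q) * (r * q) := by rw [h]; simp only [star_mul, mul_assoc]
    _ = 0 := by rw [hrq, star_zero, zero_mul]

theorem eq_zero_of_mul_self_eq_smul {𝕜 A : Type*} [CommRing 𝕜] [Ring A] [Algebra 𝕜 A]
    {a : A} {z : 𝕜} (h : a * a = z • a) (hz : z ∈ resolventSet 𝕜 a) : a = 0 := by
  refine (spectrum.mem_resolventSet_iff.mp hz).mul_left_eq_zero.mp ?_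
  rw [mul_sub, Algebra.algebraMap_eq_smul_one, mul_smul_one, h, sub_self]

theorem mul_sub_mul_self_eq_two_smul {A : Type*} [Ring A] {r b t : A} (hrb : r * b = b * r)
    (hrt : Commute r t) (hbt : Commute b t) (hrbr : r * b * r = r) (hpt : r * b * t = t)
    (htt : t * t = r * r) : b * (r - t) * (b * (r - t)) = 2 • (b * (r - t)) := by
  have hbd : Commute b (r - t) := Commute.sub_right hrb.symm hbt
  have hdd : (r - t) * (r - t) = 2 • (r * (r - t)) := by
    rw [sub_mul, mul_sub, mul_sub, htt, ← hrt.eq, two_smul]; abel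
  have hpd : r * b * (r - t) = r - t := by rw [mul_sub, hrbr, hpt]
  calc b * (r - t) * (b * (r - t)) = b * (b * ((r - t) * (r - t))) := by
        rw [hbd.symm.mul_mul_mul_comm]; simp only [mul_assoc]
    _ = 2 • (b * (r * b * (r - t))) := by
        rw [hdd, hrb, mul_smul_comm, mul_smul_comm]; simp only [mul_assoc]
    _ = 2 • (b * (r - t)) := by rw [hpd]

theorem eq_of_abs_splitting_converges {A : Type*} [CStarAlgebra A] [PartialOrder A]
    [StarOrderedRing A] {t r b : A} (ht : IsSelfAdjoint t) (hr : 0 ≤ r)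
    (hrt : r * r = star t * t) (hrbr : r * b * r = r) (hrb : IsSelfAdjoint (r * b))
    (hbr : IsSelfAdjoint (b * r)) (hconv : spectralRadius ℂ (b * (r - t)) < 1) : t = r := by
  have hrb_comm : r * b = b * r := hr.isSelfAdjoint.mul_comm_of_penrose hrbr hrb hbr
  have hrt_comm : Commute r t := commute_of_mul_self_eq_star_mul_self hr hrt ht.isStarNormal
  have htt : t * t = r * r := by rw [hrt, ht.star_eq]
  have htp : t * (r * b) = t := by
    have hrq : r * (1 - r * b) = 0 := by
      rw [mul_sub, mul_one, hrb_comm, ← mul_assoc, hrbr, sub_self]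
    have := mul_eq_zero_of_star_mul_self_eq
      (by rw [ht.star_eq, hr.isSelfAdjoint.star_eq, htt]) hrq
    rwa [mul_sub, mul_one, sub_eq_zero, eq_comm] at this
  have hpt : r * b * t = t := by
    simpa only [star_mul, ht.star_eq, hrb.star_eq] using congrArg star htp
  have hbt : Commute b t := by
    calc b * t = b * (t * (r * b)) := by rw [htp]
      _ = r * b * t * b := by rw [hrt_comm.symm.left_comm, hrb_comm]; simp only [mul_assoc]
      _ = t * b := by rw [hpt]
  have hsplit : b * (r - t) = 0 := by
    refine eq_zero_of_mul_self_eq_smul (z := (2 : ℂ)) ?_ ?_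
    · exact_mod_cast mul_sub_mul_self_eq_two_smul hrb_comm hrt_comm hbt hrbr hpt htt
    · exact spectrum.mem_resolventSet_of_spectralRadius_lt (hconv.trans (by norm_num))
  calc t = r * b * t := hpt.symm
    _ = r * b * r := by rw [eq_comm, ← sub_eq_zero, ← mul_sub, mul_assoc, hsplit, mul_zero]
    _ = r := hrbr

theorem positive_of_abs_splitting_converges_general
    {H : Type*} [NormedAddCommGroup H] [InnerProductSpace ℂ H] [CompleteSpace H]
    (T R Rd : H →L[ℂ] H)
    (hT : IsSelfAdjoint T)
    -- R = |T|
    (hR : R.IsPositive) (hR2 : R ∘L R = adjoint T ∘L T)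
    (hRd : IsMoorePenroseInverse R Rd)
    (hconv : spectralRadius ℂ (Rd ∘L (R - T)) < 1) :
    T.IsPositive := by
  obtain ⟨hRRdR, -, hRRd, hRdR⟩ := hRd
  have hTR : T = R := eq_of_abs_splitting_converges hT ((nonneg_iff_isPositive R).mpr hR)
    hR2 hRRdR hRRd hRdR hconv
  exact hTR ▸ hR

/-- If the proper splitting `T = |T| - (|T| - T)` of a self-adjoint closed range operator
converges, then `T` is positive. -/
theorem positive_of_abs_splitting_converges
    {H : Type*} [NormedAddCommGroup H] [InnerProductSpace ℂ H] [CompleteSpace H]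
    (T R Rd : H →L[ℂ] H)
    (hT : IsSelfAdjoint T)
    (hTcr : IsClosed (LinearMap.range (T : H →ₗ[ℂ] H) : Set H))
    -- R = |T|
    (hR : R.IsPositive) (hR2 : R ∘L R = adjoint T ∘L T)
    (hRd : IsMoorePenroseInverse R Rd)
    (hconv : spectralRadius ℂ (Rd ∘L (R - T)) < 1) :
    T.IsPositive :=
  positive_of_abs_splitting_converges_general T R Rd hT hR hR2 hRd hconv
end

section
/- Let T be a self-adjoint closed range operator on a complex Hilbert space. If ‖P_T − T‖ < 1 (convergence of the projection proper splitting), then ‖P_T − |T|‖ < 1 (convergence of the polar proper splitting) and ‖P_T − |T|‖ ≤ ‖P_T − T‖. -/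
/-!
Work in the C⋆-algebra of bounded operators, where `R = |T|` and `P` is a star projection with
`P T = T`. Since `T ≤ |T|`, we get `P - |T| ≤ P - T ≤ ‖P - T‖`. Conversely `‖|T| x‖ = ‖T x‖`, so `|T|`
vanishes on `ker P` and `|T| = P |T| P ≤ ‖T‖ P`; with `‖T‖ ≤ ‖P‖ + ‖P - T‖ ≤ 1 + ‖P - T‖` this gives
`|T| - P ≤ ‖P - T‖ P ≤ ‖P - T‖`. A self-adjoint element squeezed between `-c` and `c` has norm at
most `c`.
-/

open ContinuousLinearMap

theorem CStarRing.norm_mul_eq_of_star_mul_self_eq {E : Type*} [NonUnitalNormedRing E]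
    [StarRing E] [CStarRing E] {a b : E} (h : star a * a = star b * b) (c : E) :
    ‖a * c‖ = ‖b * c‖ := by
  have hsq : ‖a * c‖ * ‖a * c‖ = ‖b * c‖ * ‖b * c‖ := by
    rw [← CStarRing.norm_star_mul_self, ← CStarRing.norm_star_mul_self, star_mul, star_mul,
      mul_assoc, mul_assoc, ← mul_assoc (star a), ← mul_assoc (star b), h]
  exact (mul_self_inj (norm_nonneg _) (norm_nonneg _)).mp hsq

section CStarAlgebra

variable {A : Type*} [CStarAlgebra A] [PartialOrder A] [StarOrderedRing A]

theorem IsSelfAdjoint.norm_le_of_mem_Icc {a : A} (ha : IsSelfAdjoint a) {c : ℝ} (hc : 0 ≤ c)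
    (h : a ∈ Set.Icc (-algebraMap ℝ A c) (algebraMap ℝ A c)) : ‖a‖ ≤ c := by
  obtain _ | _ := subsingleton_or_nontrivial A
  · simp [Subsingleton.elim a 0, hc]
  rw [← map_neg] at h
  obtain hmem | hmem := CStarAlgebra.norm_or_neg_norm_mem_spectrum ha
  · exact (le_algebraMap_iff_spectrum_le ha).mp h.2 _ hmem
  · linarith [(algebraMap_le_iff_le_spectrum ha).mp h.1 _ hmem]

theorem CFC.le_abs {a : A} (ha : IsSelfAdjoint a) : a ≤ CFC.abs a := by
  rw [← sub_nonneg, CFC.abs_sub_self a ha]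
  exact nsmul_nonneg (CFC.negPart_nonneg a) 2

theorem CFC.abs_mul_eq_self_of_mul_eq_self {a b : A} (h : a * b = a) :
    CFC.abs a * b = CFC.abs a := by
  have hzero : ‖CFC.abs a * (1 - b)‖ = 0 := by
    have hsq : star (CFC.abs a) * CFC.abs a = star a * a := by
      rw [(CFC.abs_nonneg a).isSelfAdjoint.star_eq, CFC.abs_mul_abs]
    rw [CStarRing.norm_mul_eq_of_star_mul_self_eq hsq, mul_sub, mul_one, h,
      sub_self, norm_zero]
  rwa [norm_eq_zero, mul_sub, mul_one, sub_eq_zero, eq_comm] at hzero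

theorem IsStarProjection.le_norm_smul_of_mul_eq_self {p r : A} (hp : IsStarProjection p)
    (hr : IsSelfAdjoint r) (hrp : r * p = r) : r ≤ ‖r‖ • p := by
  have hpr : p * r = r := by
    simpa [hr.star_eq, hp.isSelfAdjoint.star_eq] using congrArg star hrp
  calc r = star p * r * p := by rw [hp.isSelfAdjoint.star_eq, hpr, hrp]
    _ ≤ star p * algebraMap ℝ A ‖r‖ * p :=
      star_left_conjugate_le_conjugate hr.le_algebraMap_norm_self p
    _ = ‖r‖ • p := by
      rw [hp.isSelfAdjoint.star_eq, Algebra.algebraMap_eq_smul_one, mul_smul_one,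
        smul_mul_assoc, hp.isIdempotentElem.eq]

theorem IsStarProjection.norm_sub_abs_le_norm_sub {p a : A} (hp : IsStarProjection p)
    (ha : IsSelfAdjoint a) (hpa : p * a = a) : ‖p - CFC.abs a‖ ≤ ‖p - a‖ := by
  set c := ‖p - a‖
  have hap : a * p = a := by
    simpa [ha.star_eq, hp.isSelfAdjoint.star_eq] using congrArg star hpa
  have habs_le : CFC.abs a ≤ ‖a‖ • p := by
    simpa only [CFC.norm_abs] using hp.le_norm_smul_of_mul_eq_self
      (CFC.abs_nonneg a).isSelfAdjoint (CFC.abs_mul_eq_self_of_mul_eq_self hap)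
  have hnorm : ‖a‖ - 1 ≤ c := by
    have := norm_sub_le p (p - a)
    rw [sub_sub_cancel] at this
    linarith [hp.norm_le]
  refine (hp.isSelfAdjoint.sub (CFC.abs_nonneg a).isSelfAdjoint).norm_le_of_mem_Icc
    (norm_nonneg _) ⟨?_, ?_⟩
  · rw [neg_le, neg_sub]
    calc CFC.abs a - p ≤ ‖a‖ • p - p := sub_le_sub_right habs_le p
      _ = (‖a‖ - 1) • p := by rw [sub_smul, one_smul]
      _ ≤ c • p := smul_le_smul_of_nonneg_right hnorm hp.nonneg
      _ ≤ c • 1 := smul_le_smul_of_nonneg_left hp.le_one (norm_nonneg _)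
      _ = algebraMap ℝ A c := (Algebra.algebraMap_eq_smul_one c).symm
  · exact (sub_le_sub_left (CFC.le_abs ha) p).trans
      (hp.isSelfAdjoint.sub ha).le_algebraMap_norm_self

end CStarAlgebra

theorem ContinuousLinearMap.eq_abs_of_isPositive_of_comp_self {H : Type*} [NormedAddCommGroup H]
    [InnerProductSpace ℂ H] [CompleteSpace H] {T R : H →L[ℂ] H}
    (hR : R.IsPositive) (hR2 : R ∘L R = adjoint T ∘L T) : R = CFC.abs T := by
  rw [CFC.abs, star_eq_adjoint]
  exact (CFC.sqrt_unique hR2 ((nonneg_iff_isPositive R).mpr hR)).symm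

theorem ContinuousLinearMap.IsIdempotentElem.mul_eq_right_of_range_le {R M : Type*} [Semiring R]
    [TopologicalSpace M] [AddCommMonoid M] [Module R M] {p q : M →L[R] M}
    (hp : IsIdempotentElem p)
    (h : LinearMap.range (q : M →ₗ[R] M) ≤ LinearMap.range (p : M →ₗ[R] M)) :
    p * q = q := by
  have hp' : IsIdempotentElem (p : M →ₗ[R] M) := isIdempotentElem_toLinearMap_iff.mpr hp
  have := (LinearMap.IsIdempotentElem.comp_eq_right_iff hp' (q : M →ₗ[R] M)).mpr h
  exact ContinuousLinearMap.coe_injective this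

theorem projection_splitting_implies_polar_splitting_general
    {H : Type*} [NormedAddCommGroup H] [InnerProductSpace ℂ H] [CompleteSpace H]
    (T R P : H →L[ℂ] H)
    (hT : IsSelfAdjoint T)
    -- R = |T|
    (hR : R.IsPositive) (hR2 : R ∘L R = adjoint T ∘L T)
    -- P is the orthogonal projection onto ran T
    (hP : IsSelfAdjoint P) (hP2 : P ∘L P = P)
    (hPran : LinearMap.range (P : H →ₗ[ℂ] H) = LinearMap.range (T : H →ₗ[ℂ] H))
    (hconv : ‖P - T‖ < 1) :
    ‖P - R‖ < 1 ∧ ‖P - R‖ ≤ ‖P - T‖ := by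
  have hPproj : IsStarProjection P := ⟨hP2, hP⟩
  have hPT : P * T = T :=
    ContinuousLinearMap.IsIdempotentElem.mul_eq_right_of_range_le hP2 hPran.ge
  have hle : ‖P - R‖ ≤ ‖P - T‖ := by
    rw [eq_abs_of_isPositive_of_comp_self hR hR2]
    exact hPproj.norm_sub_abs_le_norm_sub hT hPT
  exact ⟨hle.trans_lt hconv, hle⟩

/-- For self-adjoint closed range `T`, convergence of the projection proper splitting
implies convergence of the polar proper splitting, with `‖P_T - |T|‖ ≤ ‖P_T - T‖`. -/
theorem projection_splitting_implies_polar_splitting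
    {H : Type*} [NormedAddCommGroup H] [InnerProductSpace ℂ H] [CompleteSpace H]
    (T R P : H →L[ℂ] H)
    (hT : IsSelfAdjoint T)
    (hTcr : IsClosed (LinearMap.range (T : H →ₗ[ℂ] H) : Set H))
    -- R = |T|
    (hR : R.IsPositive) (hR2 : R ∘L R = adjoint T ∘L T)
    -- P is the orthogonal projection onto ran T
    (hP : IsSelfAdjoint P) (hP2 : P ∘L P = P)
    (hPran : LinearMap.range (P : H →ₗ[ℂ] H) = LinearMap.range (T : H →ₗ[ℂ] H))
    (hconv : ‖P - T‖ < 1) :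
    ‖P - R‖ < 1 ∧ ‖P - R‖ ≤ ‖P - T‖ :=
  projection_splitting_implies_polar_splitting_general T R P hT hR hR2 hP hP2 hPran hconv
end
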